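/- arXiv:1411.7109 — 8 statements merged into one kernel-verified Lean document; each statement's English description precedes it below -/
import Mathlib

section
/- Let R be an integral domain with a non-Archimedean absolute value |·|, and let A_R[a,b] be the ring of formal Laurent series Σ_{n∈ℤ} c_n t^n with coefficients in R such that |c_n| r^n → 0 as |n| → ∞ for all r ∈ [a,b]. Then for each r ∈ [a,b] with r > 0, the map |h|_r = max_n |c_n| r^n defines a non-Archimedean multiplicative absolute value on A_R[a,b] extending |·| on R; in particular A_R[a,b] is an integral domain. -/
/-! For `0 < r` the weights `‖c n‖ * r ^ n` tend to zero, so the Gauss norm is a maximum,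
attained at finitely many indices. If `i` and `j` are the largest indices where `c` and `d`
attain it, then in the coefficient of `t ^ (i + j)` of the product the term `c i * d j`
strictly dominates every other term, so by the ultrametric inequality that coefficient has
weight exactly `|c|_r * |d|_r`; the ultrametric bound on each coefficient gives the reverse
inequality. -/

open Filter Topology

noncomputable section

/-- The coefficient condition defining the ring `A_R[a,b]` of Laurent series
`∑_{n ∈ ℤ} c_n t^n` with `‖c_n‖ r^n → 0` as `|n| → ∞`, for every `r ∈ [a,b]`. -/
def LOK {R : Type*} [NormedCommRing R] (a b : ℝ) (c : ℤ → R) : Prop :=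
  ∀ r ∈ Set.Icc a b, Tendsto (fun n : ℤ => ‖c n‖ * r ^ n) (cocompact ℤ) (𝓝 0)

/-- The Gauss norm `|h|_r = max_n ‖c_n‖ r^n`. -/
def gaussNorm {R : Type*} [NormedCommRing R] (r : ℝ) (c : ℤ → R) : ℝ :=
  ⨆ n : ℤ, ‖c n‖ * r ^ n

/-- Multiplication of Laurent series, on coefficients (a convergent series in the
complete ring `R`). -/
def lmul {R : Type*} [NormedCommRing R] (c d : ℤ → R) : ℤ → R :=
  fun n => ∑' u : ℤ, c u * d (n - u)

def IsLastArgmax {ι : Type*} [LinearOrder ι] (f : ι → ℝ) (i : ι) : Prop :=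
  (∀ j, f j ≤ f i) ∧ ∀ j, i < j → f j < f i

lemma exists_forall_le_of_tendsto_zero {ι : Type*} {f : ι → ℝ}
    (hf : Tendsto f cofinite (𝓝 0)) {m : ι} (hm : 0 < f m) : ∃ i, ∀ j, f j ≤ f i := by
  have hfin : {j | f m ≤ f j}.Finite := by
    simpa only [not_lt] using eventually_cofinite.mp (hf.eventually_lt_const hm)
  obtain ⟨i, hi, hmax⟩ := Set.exists_max_image _ f hfin ⟨m, le_refl (f m)⟩
  refine ⟨i, fun j => ?_⟩
  by_cases hj : f m ≤ f j
  · exact hmax j hj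
  · exact (not_le.mp hj).le.trans hi

lemma exists_isLastArgmax_of_tendsto_zero {ι : Type*} [LinearOrder ι] {f : ι → ℝ}
    (hf : Tendsto f cofinite (𝓝 0)) {m : ι} (hm : 0 < f m) : ∃ i, IsLastArgmax f i := by
  obtain ⟨k, hk⟩ := exists_forall_le_of_tendsto_zero hf hm
  have hfin : {j | f k ≤ f j}.Finite := by
    simpa only [not_lt] using
      eventually_cofinite.mp (hf.eventually_lt_const (hm.trans_le (hk m)))
  obtain ⟨i, hi, hlast⟩ := Set.exists_max_image _ id hfin ⟨k, le_refl (f k)⟩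
  refine ⟨i, fun j => (hk j).trans hi, fun j hij => ?_⟩
  have hj : ¬ f k ≤ f j := fun hj => (hlast j hj).not_gt hij
  exact (not_le.mp hj).trans_le hi

lemma IsLastArgmax.mul_lt {f g : ℤ → ℝ} (hf0 : ∀ n, 0 ≤ f n) (hg0 : ∀ n, 0 ≤ g n) {i j : ℤ}
    (hi : IsLastArgmax f i) (hj : IsLastArgmax g j) {u : ℤ} (hu : u ≠ i) :
    f u * g (i + j - u) < f i * g j := by
  have hfi : 0 < f i := (hf0 _).trans_lt (hi.2 (i + 1) (by omega))
  have hgj : 0 < g j := (hg0 _).trans_lt (hj.2 (j + 1) (by omega))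
  rcases hu.lt_or_gt with hlt | hgt
  · calc f u * g (i + j - u) ≤ f i * g (i + j - u) := by gcongr; exacts [hg0 _, hi.1 u]
      _ < f i * g j := by gcongr; exact hj.2 _ (by omega)
  · calc f u * g (i + j - u) ≤ f u * g j := by gcongr; exacts [hf0 u, hj.1 _]
      _ < f i * g j := by gcongr; exact hi.2 u hgt

namespace IsUltrametricDist

variable {ι E : Type*} [NormedAddCommGroup E] [IsUltrametricDist E]

lemma norm_tsum_lt {f : ι → E} (hf : Tendsto f cofinite (𝓝 0)) {B : ℝ} (hB : 0 < B)
    (h : ∀ i, ‖f i‖ < B) : ‖∑' i, f i‖ < B := by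
  by_cases hpos : ∃ m, 0 < ‖f m‖
  · obtain ⟨m, hm⟩ := hpos
    obtain ⟨i, hi⟩ := exists_forall_le_of_tendsto_zero (f := fun j => ‖f j‖)
      (by simpa using hf.norm) hm
    exact (norm_tsum_le_of_forall_le_of_nonneg (norm_nonneg _) hi).trans_lt (h i)
  · push Not at hpos
    exact (norm_tsum_le_of_forall_le_of_nonneg le_rfl hpos).trans_lt hB

lemma norm_tsum_eq_of_forall_ne_lt [DecidableEq ι] {f : ι → E} (hf : Summable f) {i : ι}
    (h : ∀ j, j ≠ i → ‖f j‖ < ‖f i‖) : ‖∑' j, f j‖ = ‖f i‖ := by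
  have hle : ∀ j, ‖f j‖ ≤ ‖f i‖ := fun j => by
    rcases eq_or_ne j i with rfl | hj
    exacts [le_rfl, (h j hj).le]
  rcases (norm_nonneg (f i)).eq_or_lt with hzero | hpos
  · have := norm_tsum_le_of_forall_le_of_nonneg (norm_nonneg (f i)) hle
    linarith [norm_nonneg (∑' j, f j)]
  have hrest : ‖∑' j, if j = i then 0 else f j‖ < ‖f i‖ := by
    refine norm_tsum_lt (hf.tendsto_cofinite_zero.congr' ?_) hpos fun j => ?_
    · filter_upwards [eventually_cofinite_ne i] with j hj
      simp [hj]
    · by_cases hj : j = i <;> simp [hj, hpos, h]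
  rw [hf.tsum_eq_add_tsum_ite i, norm_add_eq_max_of_norm_ne_norm hrest.ne', max_eq_left hrest.le]

end IsUltrametricDist

section GaussNorm

variable {R : Type*} [NormedCommRing R] {r : ℝ} {c d : ℤ → R}

@[simp]
lemma gaussNorm_zero : gaussNorm r (0 : ℤ → R) = 0 := by
  simp [gaussNorm]

lemma gaussNorm_nonneg (hr : 0 ≤ r) : 0 ≤ gaussNorm r c :=
  Real.iSup_nonneg fun n => by positivity

lemma le_gaussNorm (hc : Tendsto (fun n => ‖c n‖ * r ^ n) cofinite (𝓝 0)) (n : ℤ) :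
    ‖c n‖ * r ^ n ≤ gaussNorm r c :=
  le_ciSup hc.bddAbove_range_of_cofinite n

lemma gaussNorm_eq_of_isLastArgmax {i : ℤ} (hi : IsLastArgmax (fun n => ‖c n‖ * r ^ n) i) :
    gaussNorm r c = ‖c i‖ * r ^ i :=
  le_antisymm (ciSup_le hi.1) (le_ciSup ⟨_, Set.forall_mem_range.2 hi.1⟩ i)

lemma gaussNorm_eq_zero_iff (hr : 0 < r) (hc : Tendsto (fun n => ‖c n‖ * r ^ n) cofinite (𝓝 0)) :
    gaussNorm r c = 0 ↔ c = 0 := by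
  refine ⟨fun h => funext fun n => ?_, fun h => h ▸ gaussNorm_zero⟩
  have hn : ‖c n‖ * r ^ n ≤ 0 := h ▸ le_gaussNorm hc n
  exact norm_le_zero_iff.mp (nonpos_of_mul_nonpos_left hn (zpow_pos hr n))

lemma gaussNorm_add_le [IsUltrametricDist R] (hr : 0 ≤ r)
    (hc : Tendsto (fun n => ‖c n‖ * r ^ n) cofinite (𝓝 0))
    (hd : Tendsto (fun n => ‖d n‖ * r ^ n) cofinite (𝓝 0)) :
    gaussNorm r (c + d) ≤ max (gaussNorm r c) (gaussNorm r d) := by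
  refine ciSup_le fun n => ?_
  calc ‖c n + d n‖ * r ^ n ≤ max ‖c n‖ ‖d n‖ * r ^ n := by
        gcongr; exact IsUltrametricDist.norm_add_le_max _ _
    _ = max (‖c n‖ * r ^ n) (‖d n‖ * r ^ n) := max_mul_of_nonneg _ _ (by positivity)
    _ ≤ max (gaussNorm r c) (gaussNorm r d) := max_le_max (le_gaussNorm hc n) (le_gaussNorm hd n)

lemma gaussNorm_ite_zero (x : R) : gaussNorm r (fun n => if n = 0 then x else 0) = ‖x‖ := by
  have hle : ∀ n : ℤ, ‖if n = 0 then x else 0‖ * r ^ n ≤ ‖x‖ := fun n => by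
    by_cases hn : n = 0 <;> simp [hn]
  refine le_antisymm (ciSup_le hle) ?_
  simpa [gaussNorm] using le_ciSup ⟨_, Set.forall_mem_range.2 hle⟩ 0

end GaussNorm

section Convolution

variable {R : Type*} [NormedCommRing R] {r : ℝ} {c d : ℤ → R}

@[simp]
lemma zero_lmul : lmul 0 d = 0 := by
  ext n; simp [lmul]

@[simp]
lemma lmul_zero : lmul c 0 = 0 := by
  ext n; simp [lmul]

lemma norm_mul_mul_zpow_le (hr : 0 < r) (x y : R) (u n : ℤ) :
    ‖x * y‖ * r ^ n ≤ (‖x‖ * r ^ u) * (‖y‖ * r ^ (n - u)) := by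
  rw [mul_mul_mul_comm, ← zpow_add₀ hr.ne', add_sub_cancel]
  gcongr
  exact norm_mul_le x y

lemma norm_mul_mul_zpow_eq [NormMulClass R] (hr : r ≠ 0) (x y : R) (u n : ℤ) :
    ‖x * y‖ * r ^ n = (‖x‖ * r ^ u) * (‖y‖ * r ^ (n - u)) := by
  rw [mul_mul_mul_comm, ← zpow_add₀ hr, add_sub_cancel, norm_mul]

lemma summable_lmul_term [IsUltrametricDist R] [CompleteSpace R] (hr : 0 < r)
    (hc : Tendsto (fun n => ‖c n‖ * r ^ n) cofinite (𝓝 0))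
    (hd : Tendsto (fun n => ‖d n‖ * r ^ n) cofinite (𝓝 0)) (n : ℤ) :
    Summable fun u => c u * d (n - u) := by
  refine NonarchimedeanAddGroup.summable_of_tendsto_cofinite_zero ?_
  rw [tendsto_zero_iff_norm_tendsto_zero]
  have hbound : ∀ u, ‖c u * d (n - u)‖ ≤ ‖c u‖ * r ^ u * (gaussNorm r d / r ^ n) := fun u => by
    rw [← mul_div_assoc, le_div_iff₀ (zpow_pos hr n)]
    exact (norm_mul_mul_zpow_le hr _ _ u n).trans
      (mul_le_mul_of_nonneg_left (le_gaussNorm hd _) (by positivity))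
  exact squeeze_zero (fun _ => norm_nonneg _) hbound (by simpa using hc.mul_const _)

lemma norm_lmul_mul_zpow_le [IsUltrametricDist R] (hr : 0 < r)
    (hc : Tendsto (fun n => ‖c n‖ * r ^ n) cofinite (𝓝 0))
    (hd : Tendsto (fun n => ‖d n‖ * r ^ n) cofinite (𝓝 0)) (n : ℤ) :
    ‖lmul c d n‖ * r ^ n ≤ gaussNorm r c * gaussNorm r d := by
  rw [← le_div_iff₀ (zpow_pos hr n)]
  have hprod : 0 ≤ gaussNorm r c * gaussNorm r d :=
    mul_nonneg (gaussNorm_nonneg hr.le) (gaussNorm_nonneg hr.le)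
  refine IsUltrametricDist.norm_tsum_le_of_forall_le_of_nonneg
    (div_nonneg hprod (zpow_pos hr n).le) fun u => ?_
  rw [le_div_iff₀ (zpow_pos hr n)]
  exact (norm_mul_mul_zpow_le hr _ _ u n).trans
    (mul_le_mul (le_gaussNorm hc u) (le_gaussNorm hd _) (by positivity)
      (gaussNorm_nonneg hr.le))

lemma exists_norm_lmul_mul_zpow_eq [IsUltrametricDist R] [CompleteSpace R] [NormMulClass R]
    (hr : 0 < r) (hc : Tendsto (fun n => ‖c n‖ * r ^ n) cofinite (𝓝 0))
    (hd : Tendsto (fun n => ‖d n‖ * r ^ n) cofinite (𝓝 0)) (hc0 : c ≠ 0) (hd0 : d ≠ 0) :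
    ∃ n, ‖lmul c d n‖ * r ^ n = gaussNorm r c * gaussNorm r d := by
  obtain ⟨mc, hmc⟩ := Function.ne_iff.mp hc0
  obtain ⟨md, hmd⟩ := Function.ne_iff.mp hd0
  obtain ⟨i, hi⟩ := exists_isLastArgmax_of_tendsto_zero hc (m := mc) (by positivity)
  obtain ⟨j, hj⟩ := exists_isLastArgmax_of_tendsto_zero hd (m := md) (by positivity)
  have hdom : ∀ u, u ≠ i → ‖c u * d (i + j - u)‖ < ‖c i * d (i + j - i)‖ := fun u hu => by
    refine lt_of_mul_lt_mul_right ?_ (zpow_pos hr (i + j)).le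
    rw [norm_mul_mul_zpow_eq hr.ne' _ _ u, norm_mul_mul_zpow_eq hr.ne' _ _ i, add_sub_cancel_left]
    exact hi.mul_lt (fun _ => by positivity) (fun _ => by positivity) hj hu
  refine ⟨i + j, ?_⟩
  rw [lmul, IsUltrametricDist.norm_tsum_eq_of_forall_ne_lt (summable_lmul_term hr hc hd _) hdom,
    norm_mul_mul_zpow_eq hr.ne' _ _ i, add_sub_cancel_left, gaussNorm_eq_of_isLastArgmax hi,
    gaussNorm_eq_of_isLastArgmax hj]

lemma gaussNorm_lmul [IsUltrametricDist R] [CompleteSpace R] [NormMulClass R] (hr : 0 < r)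
    (hc : Tendsto (fun n => ‖c n‖ * r ^ n) cofinite (𝓝 0))
    (hd : Tendsto (fun n => ‖d n‖ * r ^ n) cofinite (𝓝 0)) :
    gaussNorm r (lmul c d) = gaussNorm r c * gaussNorm r d := by
  rcases eq_or_ne c 0 with rfl | hc0
  · simp
  rcases eq_or_ne d 0 with rfl | hd0
  · simp
  have hle := norm_lmul_mul_zpow_le hr hc hd
  obtain ⟨n, hn⟩ := exists_norm_lmul_mul_zpow_eq hr hc hd hc0 hd0
  exact le_antisymm (ciSup_le hle) (hn ▸ le_ciSup ⟨_, Set.forall_mem_range.2 hle⟩ n)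

lemma lmul_ne_zero [IsUltrametricDist R] [CompleteSpace R] [NormMulClass R] (hr : 0 < r)
    (hc : Tendsto (fun n => ‖c n‖ * r ^ n) cofinite (𝓝 0))
    (hd : Tendsto (fun n => ‖d n‖ * r ^ n) cofinite (𝓝 0)) (hc0 : c ≠ 0) (hd0 : d ≠ 0) :
    lmul c d ≠ 0 := by
  intro h
  have := gaussNorm_lmul hr hc hd
  rw [h, gaussNorm_zero, eq_comm, mul_eq_zero, gaussNorm_eq_zero_iff hr hc,
    gaussNorm_eq_zero_iff hr hd] at this
  exact this.elim hc0 hd0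

end Convolution

theorem gaussNorm_absolute_value_general {R : Type*} [NormedCommRing R] [CompleteSpace R]
    (hna : IsNonarchimedean (norm : R → ℝ))
    (hmul : ∀ x y : R, ‖x * y‖ = ‖x‖ * ‖y‖)
    (a b : ℝ)
    (r : ℝ) (hr : r ∈ Set.Icc a b) (hr0 : 0 < r) :
    (∀ c : ℤ → R, LOK a b c → (gaussNorm r c = 0 ↔ c = 0)) ∧
    (∀ c d : ℤ → R, LOK a b c → LOK a b d →
      gaussNorm r (lmul c d) = gaussNorm r c * gaussNorm r d) ∧
    (∀ c d : ℤ → R, LOK a b c → LOK a b d →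
      gaussNorm r (c + d) ≤ max (gaussNorm r c) (gaussNorm r d)) ∧
    (∀ x : R, gaussNorm r (fun n => if n = 0 then x else 0) = ‖x‖) ∧
    (∀ c d : ℤ → R, LOK a b c → LOK a b d → c ≠ 0 → d ≠ 0 → lmul c d ≠ 0) := by
  have := IsUltrametricDist.isUltrametricDist_of_isNonarchimedean_norm hna
  have : NormMulClass R := ⟨hmul⟩
  have hT : ∀ c : ℤ → R, LOK a b c → Tendsto (fun n => ‖c n‖ * r ^ n) cofinite (𝓝 0) :=
    fun c hc => cocompact_eq_cofinite ℤ ▸ hc r hr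
  exact ⟨fun c hc => gaussNorm_eq_zero_iff hr0 (hT c hc),
    fun c d hc hd => gaussNorm_lmul hr0 (hT c hc) (hT d hd),
    fun c d hc hd => gaussNorm_add_le hr0.le (hT c hc) (hT d hd),
    gaussNorm_ite_zero,
    fun c d hc hd => lmul_ne_zero hr0 (hT c hc) (hT d hd)⟩

/-- For an integral domain `R` complete with respect to a non-Archimedean absolute value,
and `0 ≤ a < b`, `r ∈ [a,b]` with `r > 0`, the Gauss norm `|·|_r` on `A_R[a,b]` vanishes
only at `0`, is multiplicative, satisfies the strong triangle inequality, and extends the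
absolute value of `R`; in particular `A_R[a,b]` is an integral domain. -/
theorem gaussNorm_absolute_value {R : Type*} [NormedCommRing R] [IsDomain R] [CompleteSpace R]
    (hna : IsNonarchimedean (norm : R → ℝ))
    (hmul : ∀ x y : R, ‖x * y‖ = ‖x‖ * ‖y‖)
    (a b : ℝ) (ha : 0 ≤ a) (hab : a < b)
    (r : ℝ) (hr : r ∈ Set.Icc a b) (hr0 : 0 < r) :
    (∀ c : ℤ → R, LOK a b c → (gaussNorm r c = 0 ↔ c = 0)) ∧
    (∀ c d : ℤ → R, LOK a b c → LOK a b d →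
      gaussNorm r (lmul c d) = gaussNorm r c * gaussNorm r d) ∧
    (∀ c d : ℤ → R, LOK a b c → LOK a b d →
      gaussNorm r (c + d) ≤ max (gaussNorm r c) (gaussNorm r d)) ∧
    (∀ x : R, gaussNorm r (fun n => if n = 0 then x else 0) = ‖x‖) ∧
    (∀ c d : ℤ → R, LOK a b c → LOK a b d → c ≠ 0 → d ≠ 0 → lmul c d ≠ 0) :=
  gaussNorm_absolute_value_general hna hmul a b r hr hr0
end
end

section
/- Let R be an integral domain complete with respect to a non-Archimedean absolute value. The group of units of the ring A_R(𝔸¹) of entire power series equals the group of units of R, i.e., A_R(𝔸¹)^× = R^×. -/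
open Filter Topology

noncomputable section

/-- The predicate describing the ring `A_R(𝔸¹)` of entire power series over `R`:
`‖c_n‖ r^n → 0` as `n → ∞`, for every `r > 0`. -/
def EntireOK {R : Type*} [NormedCommRing R] (f : PowerSeries R) : Prop :=
  ∀ r : ℝ, 0 < r →
    Tendsto (fun n : ℕ => ‖PowerSeries.coeff n f‖ * r ^ n) atTop (𝓝 0)

/-!
Fix `r > 0`. For an entire series `f ≠ 0` the terms `‖c_i‖ rⁱ` tend to `0`, so they attain a
maximum, first at some index `ν_r(f)`. In the convolution computing the coefficient of index
`ν_r(f) + ν_r(g)` of `f * g`, the product of the two dominant coefficients is strictly larger than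
every other term, so by the ultrametric inequality that coefficient is nonzero. Hence `f * g = 1`
forces `ν_r(f) = 0` for every `r`; but if `c_n ≠ 0` for some `n > 0`, then `‖c_n‖ rⁿ > ‖c_0‖`
for large `r`, so `ν_r(f) > 0`.
-/

open PowerSeries

def IsLeastArgmax (u : ℕ → ℝ) (m : ℕ) : Prop :=
  (∀ n, u n ≤ u m) ∧ ∀ k < m, u k < u m

lemma exists_isLeastArgmax_of_tendsto_zero {u : ℕ → ℝ} (hu : Tendsto u atTop (𝓝 0))
    {n₀ : ℕ} (hn₀ : 0 < u n₀) : ∃ m, IsLeastArgmax u m := by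
  classical
  obtain ⟨N, hN⟩ := eventually_atTop.mp (hu.eventually (gt_mem_nhds hn₀))
  obtain ⟨b, -, hb⟩ := (Finset.range (max N (n₀ + 1))).exists_max_image u
    ⟨n₀, Finset.mem_range.mpr (by omega)⟩
  have hmax : ∃ m, ∀ n, u n ≤ u m := by
    refine ⟨b, fun n => ?_⟩
    by_cases hn : n < max N (n₀ + 1)
    · exact hb n (Finset.mem_range.mpr hn)
    · exact (hN n (by omega)).le.trans (hb n₀ (Finset.mem_range.mpr (by omega)))
  refine ⟨Nat.find hmax, Nat.find_spec hmax, fun k hk => ?_⟩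
  obtain ⟨n, hn⟩ := not_forall.mp (Nat.find_min hmax hk)
  exact (not_le.mp hn).trans_le (Nat.find_spec hmax n)

lemma IsLeastArgmax.mul_lt {u v : ℕ → ℝ} {m n i j : ℕ} (hu : IsLeastArgmax u m)
    (hv : IsLeastArgmax v n) (hu₀ : ∀ k, 0 ≤ u k) (hv₀ : ∀ k, 0 ≤ v k) (hm : 0 < u m)
    (hn : 0 < v n) (hij : i + j = m + n) (hne : (i, j) ≠ (m, n)) :
    u i * v j < u m * v n := by
  rcases lt_trichotomy i m with h | rfl | h
  · calc u i * v j ≤ u i * v n := mul_le_mul_of_nonneg_left (hv.1 j) (hu₀ i)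
      _ < u m * v n := mul_lt_mul_of_pos_right (hu.2 i h) hn
  · exact absurd (by rw [Nat.add_left_cancel hij]) hne
  · calc u i * v j ≤ u m * v j := mul_le_mul_of_nonneg_right (hu.1 i) (hv₀ j)
      _ < u m * v n := mul_lt_mul_of_pos_left (hv.2 j (by omega)) hm

lemma norm_sum_eq_of_forall_norm_lt {E ι : Type*} [SeminormedAddCommGroup E]
    [IsUltrametricDist E] {s : Finset ι} {f : ι → E} {a : ι} (ha : a ∈ s)
    (hlt : ∀ b ∈ s, b ≠ a → ‖f b‖ < ‖f a‖) : ‖∑ b ∈ s, f b‖ = ‖f a‖ := by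
  classical
  rw [← Finset.add_sum_erase s f ha]
  rcases (s.erase a).eq_empty_or_nonempty with he | hne
  · rw [he, Finset.sum_empty, add_zero]
  obtain ⟨b, hb, hle⟩ := IsUltrametricDist.exists_norm_finsetSum_le_of_nonempty hne f
  have hrest : ‖∑ b ∈ s.erase a, f b‖ < ‖f a‖ :=
    hle.trans_lt (hlt b (Finset.mem_of_mem_erase hb) (Finset.ne_of_mem_erase hb))
  rw [IsUltrametricDist.norm_add_eq_max_of_norm_ne_norm hrest.ne', max_eq_left hrest.le]

lemma entireOK_C {R : Type*} [NormedCommRing R] (c : R) : EntireOK (C c) := fun _ _ =>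
  tendsto_const_nhds.congr' <| (eventually_ne_atTop 0).mono fun n hn => by simp [coeff_C, hn]

section Ultrametric

variable {R : Type*} [NormedCommRing R] [IsUltrametricDist R] [NormMulClass R]

lemma norm_coeff_mul_of_isLeastArgmax {f g : R⟦X⟧} {r : ℝ} (hr : 0 < r) {m n : ℕ}
    (hm : IsLeastArgmax (fun i => ‖coeff i f‖ * r ^ i) m)
    (hn : IsLeastArgmax (fun j => ‖coeff j g‖ * r ^ j) n)
    (hfm : coeff m f ≠ 0) (hgn : coeff n g ≠ 0) :
    ‖coeff (m + n) (f * g)‖ = ‖coeff m f‖ * ‖coeff n g‖ := by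
  have hterm : ∀ i j, ‖coeff i f * coeff j g‖ * r ^ (i + j) =
      (‖coeff i f‖ * r ^ i) * (‖coeff j g‖ * r ^ j) := by
    intro i j
    rw [norm_mul, pow_add]
    ring
  rw [coeff_mul, norm_sum_eq_of_forall_norm_lt (a := (m, n))
    (Finset.HasAntidiagonal.mem_antidiagonal.mpr rfl), norm_mul]
  rintro ⟨i, j⟩ hij hne
  rw [Finset.HasAntidiagonal.mem_antidiagonal] at hij
  refine lt_of_mul_lt_mul_right (a := r ^ (m + n)) ?_ (pow_nonneg hr.le _)
  rw [← hij, hterm, hij, hterm]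
  exact hm.mul_lt hn (fun _ => by positivity) (fun _ => by positivity)
    (mul_pos (norm_pos_iff.mpr hfm) (pow_pos hr m)) (mul_pos (norm_pos_iff.mpr hgn) (pow_pos hr n))
    hij hne

lemma EntireOK.coeff_eq_zero_of_mul_eq_one {f g : R⟦X⟧} (hf : EntireOK f) (hg : EntireOK g)
    (hfg : f * g = 1) {n : ℕ} (hn : 0 < n) : coeff n f = 0 := by
  by_contra hfn
  have : Nontrivial R := nontrivial_of_ne _ _ hfn
  obtain ⟨r, hr0, hr⟩ : ∃ r, 0 < r ∧ ‖coeff 0 f‖ < ‖coeff n f‖ * r ^ n :=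
    ((eventually_gt_atTop 0).and <| ((tendsto_pow_atTop hn.ne').const_mul_atTop
      (norm_pos_iff.mpr hfn)).eventually_gt_atTop _).exists
  obtain ⟨j, hgj⟩ : ∃ j, coeff j g ≠ 0 := by
    by_contra! h
    rw [show g = 0 from ext h, mul_zero] at hfg
    exact zero_ne_one hfg
  have hfn_pos : 0 < ‖coeff n f‖ * r ^ n := by positivity
  have hgj_pos : 0 < ‖coeff j g‖ * r ^ j := by positivity
  obtain ⟨m, hm⟩ := exists_isLeastArgmax_of_tendsto_zero (hf r hr0) hfn_pos
  obtain ⟨k, hk⟩ := exists_isLeastArgmax_of_tendsto_zero (hg r hr0) hgj_pos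
  have hfm : coeff m f ≠ 0 := fun h => by simpa [h] using hfn_pos.trans_le (hm.1 n)
  have hgk : coeff k g ≠ 0 := fun h => by simpa [h] using hgj_pos.trans_le (hk.1 j)
  have hm0 : m ≠ 0 := by
    rintro rfl
    simpa using hr.trans_le (hm.1 n)
  have hmk := norm_coeff_mul_of_isLeastArgmax hr0 hm hk hfm hgk
  rw [hfg, coeff_one, if_neg (by omega), norm_zero] at hmk
  exact mul_ne_zero (norm_ne_zero_iff.mpr hfm) (norm_ne_zero_iff.mpr hgk) hmk.symm

end Ultrametric

theorem units_of_entire_eq_units_general {R : Type*} [NormedCommRing R]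
    (hna : IsNonarchimedean (norm : R → ℝ))
    (hmul : ∀ x y : R, ‖x * y‖ = ‖x‖ * ‖y‖) :
    (∀ f g : PowerSeries R, EntireOK f → EntireOK g → f * g = 1 →
      ∃ c : R, IsUnit c ∧ f = PowerSeries.C c) ∧
    (∀ c : R, IsUnit c →
      ∃ g : PowerSeries R, EntireOK g ∧ (PowerSeries.C c) * g = 1) := by
  have := IsUltrametricDist.isUltrametricDist_of_isNonarchimedean_norm hna
  have : NormMulClass R := ⟨hmul⟩
  refine ⟨fun f g hf hg hfg => ⟨constantCoeff f, ?_, ?_⟩, fun c ⟨u, hu⟩ => ?_⟩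
  · exact (IsUnit.of_mul_eq_one g hfg).map constantCoeff
  · ext (_ | n)
    · simp
    · rw [hf.coeff_eq_zero_of_mul_eq_one hg hfg n.succ_pos, coeff_C, if_neg n.succ_ne_zero]
  · refine ⟨C ↑u⁻¹, entireOK_C _, ?_⟩
    rw [← hu, ← map_mul, Units.mul_inv, map_one]

/-- For an integral domain `R` complete with respect to a non-Archimedean absolute value,
the group of units of the ring `A_R(𝔸¹)` of entire power series equals `R^×`:
any unit of `A_R(𝔸¹)` is a constant series given by a unit of `R`, and conversely
every unit of `R` is a unit of `A_R(𝔸¹)`. -/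
theorem units_of_entire_eq_units {R : Type*} [NormedCommRing R] [IsDomain R] [CompleteSpace R]
    (hna : IsNonarchimedean (norm : R → ℝ))
    (hmul : ∀ x y : R, ‖x * y‖ = ‖x‖ * ‖y‖) :
    (∀ f g : PowerSeries R, EntireOK f → EntireOK g → f * g = 1 →
      ∃ c : R, IsUnit c ∧ f = PowerSeries.C c) ∧
    (∀ c : R, IsUnit c →
      ∃ g : PowerSeries R, EntireOK g ∧ (PowerSeries.C c) * g = 1) :=
  units_of_entire_eq_units_general hna hmul
end
end

section
/- Let h be an element of A_R(𝔾_m), the ring of everywhere-convergent Laurent series over a complete non-Archimedean integral domain R, and let τ be the automorphism given by the substitution t ↦ t^{-1}. If h · τ(h) = 1, then h = ± t^n for some integer n. -/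
/-!
For `r > 0` let `|h|ᵣ = maxᵤ ‖cᵤ‖ rᵘ`. Since the norm is ultrametric and multiplicative, the
coefficient of `h · g` at `p + q`, where `p` and `q` are the largest indices at which `|h|ᵣ` and
`|g|ᵣ` are attained, has a single dominant term and hence norm `‖c_p‖ ‖d_q‖ ≠ 0`. For `g = τ h`
this forces `p + q = 0`, so `|h|ᵣ |τ h|ᵣ = ‖1‖` for every `r`. Two nonzero coefficients
`c_x, c_y` with `y < x` would give `‖c_x‖ ‖c_y‖ r ^ (x - y) ≤ ‖1‖` for all `r > 0`, which fails
for large `r`. Hence `h = c_a tᵃ`, and the constant coefficient of `h · τ h` gives `c_a² = 1`.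
-/

open Filter Topology

noncomputable section

/-- The coefficient condition defining the ring `A_R(𝔾_m)` of everywhere convergent
Laurent series. -/
def GmOK {R : Type*} [NormedCommRing R] (c : ℤ → R) : Prop :=
  ∀ r : ℝ, 0 < r → Tendsto (fun n : ℤ => ‖c n‖ * r ^ |n|) (cocompact ℤ) (𝓝 0)

section ArgMax

variable {α : Type*}

def IsLastMax [LinearOrder α] (g : α → ℝ) (p : α) : Prop :=
  (∀ u, g u ≤ g p) ∧ ∀ u, p < u → g u < g p

lemma exists_forall_le_of_tendsto_zero_s6 {g : α → ℝ} (hg : Tendsto g cofinite (𝓝 0)) {a : α}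
    (ha : 0 < g a) : ∃ m, ∀ u, g u ≤ g m := by
  have hfin : {u | g a ≤ g u}.Finite := by
    simpa [not_lt] using eventually_cofinite.mp (hg.eventually (gt_mem_nhds ha))
  obtain ⟨m, -, hm⟩ := Set.exists_max_image _ g hfin ⟨a, le_refl (g a)⟩
  refine ⟨m, fun u => ?_⟩
  by_cases hu : g a ≤ g u
  · exact hm u hu
  · exact (not_le.mp hu).le.trans (hm a (le_refl (g a)))

lemma exists_isLastMax_of_tendsto_zero [LinearOrder α] {g : α → ℝ}
    (hg : Tendsto g cofinite (𝓝 0)) {a : α} (ha : 0 < g a) : ∃ p, IsLastMax g p := by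
  obtain ⟨m, hm⟩ := exists_forall_le_of_tendsto_zero_s6 hg ha
  have hfin : {u | g u = g m}.Finite := by
    refine (eventually_cofinite.mp (hg.eventually (gt_mem_nhds (ha.trans_le (hm a))))).subset ?_
    intro u (hu : g u = g m)
    simp [hu]
  obtain ⟨p, hpm, hp⟩ := Set.exists_max_image _ id hfin ⟨m, rfl⟩
  refine ⟨p, fun u => (hm u).trans_eq hpm.symm, fun u hpu => ?_⟩
  refine ((hm u).trans_eq hpm.symm).lt_of_ne fun hu => ?_
  exact (hp u (hu.trans hpm)).not_gt hpu

lemma IsLastMax.mul_lt {g h : ℤ → ℝ} {p q : ℤ} (hp : IsLastMax g p) (hq : IsLastMax h q)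
    (hg : ∀ u, 0 ≤ g u) (hh : ∀ v, 0 ≤ h v) (hgp : 0 < g p) (hhq : 0 < h q) {u : ℤ}
    (hu : u ≠ p) : g u * h (p + q - u) < g p * h q := by
  rcases hu.lt_or_gt with hlt | hgt
  · exact mul_lt_mul' (hp.1 u) (hq.2 _ (by omega)) (hh _) hgp
  · rw [mul_comm, mul_comm (g p)]
    exact mul_lt_mul' (hq.1 _) (hp.2 u hgt) (hg u) hhq

end ArgMax

section Ultrametric

variable {ι E : Type*} [NormedAddCommGroup E] [IsUltrametricDist E]

lemma norm_tsum_lt_of_forall_norm_lt {f : ι → E} (hf : Tendsto f cofinite (𝓝 0)) {B : ℝ}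
    (hB : 0 < B) (h : ∀ i, ‖f i‖ < B) : ‖∑' i, f i‖ < B := by
  by_cases hpos : ∃ a, 0 < ‖f a‖
  · obtain ⟨a, ha⟩ := hpos
    obtain ⟨m, hm⟩ :=
      exists_forall_le_of_tendsto_zero_s6 (tendsto_zero_iff_norm_tendsto_zero.mp hf) ha
    have : Nonempty ι := ⟨a⟩
    exact (IsUltrametricDist.norm_tsum_le_of_forall_le hm).trans_lt (h m)
  · simp only [not_exists, not_lt] at hpos
    have hzero : ∀ i, f i = 0 := fun i => norm_le_zero_iff.mp (hpos i)
    simpa [hzero] using hB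

lemma norm_tsum_eq_of_forall_ne_lt [CompleteSpace E] [DecidableEq ι] {f : ι → E}
    (hf : Tendsto f cofinite (𝓝 0)) (p : ι) (hp : ∀ i, i ≠ p → ‖f i‖ < ‖f p‖) :
    ‖∑' i, f i‖ = ‖f p‖ := by
  rcases (norm_nonneg (f p)).eq_or_lt with h0 | hpos
  · rw [tsum_eq_single p fun i hi => absurd (hp i hi) (by rw [← h0]; exact (norm_nonneg _).not_gt)]
  have hrest : ‖∑' i, if i = p then 0 else f i‖ < ‖f p‖ := by
    refine norm_tsum_lt_of_forall_norm_lt ?_ hpos fun i => ?_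
    · refine hf.congr' ?_
      filter_upwards [eventually_cofinite_ne p] with i hi
      simp [hi]
    · by_cases hi : i = p
      · simpa [hi] using hpos
      · simpa [hi] using hp i hi
  rw [(NonarchimedeanAddGroup.summable_of_tendsto_cofinite_zero hf).tsum_eq_add_tsum_ite p,
    IsUltrametricDist.norm_add_eq_max_of_norm_ne_norm hrest.ne', max_eq_left hrest.le]

end Ultrametric

lemma zpow_le_max_inv_zpow_abs {r : ℝ} (hr : 0 < r) (u : ℤ) : r ^ u ≤ max r r⁻¹ ^ |u| := by
  rcases abs_choice u with h | h
  · rw [h]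
    exact zpow_le_zpow_left₀ (h ▸ abs_nonneg u) hr.le (le_max_left _ _)
  · calc r ^ u = r⁻¹ ^ |u| := by rw [h, inv_zpow', neg_neg]
      _ ≤ max r r⁻¹ ^ |u| := zpow_le_zpow_left₀ (abs_nonneg u) (by positivity) (le_max_right _ _)

lemma exists_lt_mul_zpow {a : ℝ} (ha : 0 < a) {k : ℤ} (hk : 0 < k) (b : ℝ) :
    ∃ r > 0, b < a * r ^ k :=
  (((tendsto_zpow_atTop_atTop hk).const_mul_atTop ha).eventually_gt_atTop b).and
    (eventually_gt_atTop 0) |>.exists.imp fun _ h => ⟨h.2, h.1⟩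

namespace GmOK

variable {R : Type*} [NormedCommRing R] {c : ℤ → R}

lemma comp_neg (hc : GmOK c) : GmOK fun n => c (-n) := by
  intro r hr
  have h := hc r hr
  rw [cocompact_eq_cofinite] at h ⊢
  simpa [Function.comp_def, abs_neg] using h.comp neg_injective.tendsto_cofinite

lemma tendsto_norm_mul_zpow (hc : GmOK c) {r : ℝ} (hr : 0 < r) :
    Tendsto (fun u : ℤ => ‖c u‖ * r ^ u) cofinite (𝓝 0) := by
  have h := hc (max r r⁻¹) (lt_max_of_lt_left hr)
  rw [cocompact_eq_cofinite] at h
  refine squeeze_zero (fun u => by positivity) (fun u => ?_) h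
  exact mul_le_mul_of_nonneg_left (zpow_le_max_inv_zpow_abs hr u) (norm_nonneg _)

lemma tendsto_zero (hc : GmOK c) : Tendsto c cofinite (𝓝 0) :=
  tendsto_zero_iff_norm_tendsto_zero.mpr (by simpa using hc.tendsto_norm_mul_zpow one_pos)

end GmOK

section Laurent

variable {R : Type*} [NormedCommRing R]

lemma exists_ne_zero_of_lmul_eq_one [Nontrivial R] {c d : ℤ → R}
    (h : lmul c d = fun n => if n = 0 then (1 : R) else 0) : ∃ a, c a ≠ 0 := by
  by_contra! hc
  simpa [lmul, hc] using congrFun h 0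

variable [IsUltrametricDist R] [CompleteSpace R]

lemma norm_lmul_eq_of_isLastMax (hmul : ∀ x y : R, ‖x * y‖ = ‖x‖ * ‖y‖) {c d : ℤ → R}
    (hc : Tendsto c cofinite (𝓝 0)) (hd : Tendsto d cofinite (𝓝 0)) {r : ℝ} (hr : 0 < r)
    {p q : ℤ} (hp : IsLastMax (fun u => ‖c u‖ * r ^ u) p)
    (hq : IsLastMax (fun v => ‖d v‖ * r ^ v) q) (hcp : c p ≠ 0) (hdq : d q ≠ 0) :
    ‖lmul c d (p + q)‖ = ‖c p‖ * ‖d q‖ := by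
  have hf : Tendsto (fun u => c u * d (p + q - u)) cofinite (𝓝 0) := by
    simpa using hc.mul (hd.comp (sub_right_injective (b := p + q)).tendsto_cofinite)
  rw [lmul, norm_tsum_eq_of_forall_ne_lt hf p, add_sub_cancel_left, hmul]
  intro u hu
  have hlt := hp.mul_lt hq (fun u => by positivity) (fun v => by positivity)
    (by positivity) (by positivity) hu
  have hweight : ∀ (a b : ℝ) (v w : ℤ), a * r ^ v * (b * r ^ w) = a * b * r ^ (v + w) :=
    fun a b v w => by rw [mul_mul_mul_comm, ← zpow_add₀ hr.ne']
  rw [hweight, hweight, add_sub_cancel] at hlt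
  rw [hmul, hmul, add_sub_cancel_left]
  exact lt_of_mul_lt_mul_right hlt (by positivity)

end Laurent

section Unit

variable {R : Type*} [NormedCommRing R] [Nontrivial R] [IsUltrametricDist R] [CompleteSpace R]

lemma norm_mul_zpow_mul_le_of_lmul_comp_neg_eq_one (hmul : ∀ x y : R, ‖x * y‖ = ‖x‖ * ‖y‖)
    {c : ℤ → R} (hc : GmOK c)
    (hunit : lmul c (fun n => c (-n)) = fun n => if n = 0 then (1 : R) else 0)
    {r : ℝ} (hr : 0 < r) (x y : ℤ) :
    ‖c x‖ * r ^ x * (‖c (-y)‖ * r ^ y) ≤ ‖(1 : R)‖ := by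
  obtain ⟨a, ha⟩ := exists_ne_zero_of_lmul_eq_one hunit
  have hga : 0 < ‖c a‖ * r ^ a := by positivity
  have hga' : 0 < ‖c (-(-a))‖ * r ^ (-a) := by rw [neg_neg]; positivity
  obtain ⟨p, hp⟩ := exists_isLastMax_of_tendsto_zero (hc.tendsto_norm_mul_zpow hr) hga
  obtain ⟨q, hq⟩ := exists_isLastMax_of_tendsto_zero (hc.comp_neg.tendsto_norm_mul_zpow hr) hga'
  have hcp : c p ≠ 0 := fun h => (hga.trans_le (hp.1 a)).ne' (by simp [h])
  have hcq : c (-q) ≠ 0 := fun h => (hga'.trans_le (hq.1 (-a))).ne' (by simp [h])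
  have hnorm := norm_lmul_eq_of_isLastMax hmul hc.tendsto_zero hc.comp_neg.tendsto_zero hr hp hq
    hcp hcq
  have hpq : p + q = 0 := by
    by_contra h
    rw [congrFun hunit, if_neg h, norm_zero] at hnorm
    exact mul_ne_zero (norm_ne_zero_iff.mpr hcp) (norm_ne_zero_iff.mpr hcq) hnorm.symm
  rw [congrFun hunit, if_pos hpq] at hnorm
  calc ‖c x‖ * r ^ x * (‖c (-y)‖ * r ^ y)
      ≤ ‖c p‖ * r ^ p * (‖c (-q)‖ * r ^ q) :=
        mul_le_mul (hp.1 x) (hq.1 y) (by positivity) (by positivity)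
    _ = ‖c p‖ * ‖c (-q)‖ * r ^ (p + q) := by rw [mul_mul_mul_comm, zpow_add₀ hr.ne']
    _ = ‖(1 : R)‖ := by rw [hpq, zpow_zero, mul_one, hnorm]

lemma subsingleton_support_of_lmul_comp_neg_eq_one (hmul : ∀ x y : R, ‖x * y‖ = ‖x‖ * ‖y‖)
    {c : ℤ → R} (hc : GmOK c)
    (hunit : lmul c (fun n => c (-n)) = fun n => if n = 0 then (1 : R) else 0) :
    (Function.support c).Subsingleton := by
  have hle : ∀ x y, c x ≠ 0 → c y ≠ 0 → x ≤ y := by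
    intro x y hx hy
    by_contra! hyx
    obtain ⟨r, hr, hlt⟩ := exists_lt_mul_zpow (a := ‖c x‖ * ‖c y‖) (by positivity)
      (k := x - y) (by omega) ‖(1 : R)‖
    have hle := norm_mul_zpow_mul_le_of_lmul_comp_neg_eq_one hmul hc hunit hr x (-y)
    rw [neg_neg, mul_mul_mul_comm, ← zpow_add₀ hr.ne', ← sub_eq_add_neg] at hle
    exact hle.not_gt hlt
  exact fun x hx y hy => (hle x y hx hy).antisymm (hle y x hy hx)

end Unit

/-- Let `h ∈ A_R(𝔾_m)` and let `τ` be the substitution `t ↦ t⁻¹`.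
If `h · τ(h) = 1` then `h = ± t^n` for some integer `n`. -/
theorem norm_one_in_Gm {R : Type*} [NormedCommRing R] [IsDomain R] [CompleteSpace R]
    (hna : IsNonarchimedean (norm : R → ℝ))
    (hmul : ∀ x y : R, ‖x * y‖ = ‖x‖ * ‖y‖)
    (c : ℤ → R) (hc : GmOK c)
    (hunit : lmul c (fun n => c (-n)) = fun n => if n = 0 then (1 : R) else 0) :
    ∃ n : ℤ, (c = fun m => if m = n then (1 : R) else 0) ∨
             (c = fun m => if m = n then (-1 : R) else 0) := by
  have := IsUltrametricDist.isUltrametricDist_of_isNonarchimedean_norm hna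
  obtain ⟨a, ha⟩ := exists_ne_zero_of_lmul_eq_one hunit
  have hsupp : ∀ u, u ≠ a → c u = 0 := fun u hu => by_contra fun h =>
    hu (subsingleton_support_of_lmul_comp_neg_eq_one hmul hc hunit h ha)
  have hsq : c a * c a = 1 := by
    have h0 := congrFun hunit 0
    simp only [lmul, zero_sub, neg_neg, if_true] at h0
    rwa [tsum_eq_single a fun u hu => by rw [hsupp u hu, zero_mul]] at h0
  refine ⟨a, (mul_self_eq_one_iff.mp hsq).imp (fun h => ?_) (fun h => ?_)⟩ <;> funext u <;>
    by_cases hu : u = a <;> simp [hu, h, hsupp]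
end
end

section
/- Let R be a field complete with respect to a non-Archimedean absolute value and let F ∈ A_R[u] be a polynomial in u over the ring A_R of entire series, monic and non-constant in u. Then the natural map A_R[u] → R{t,u}/(F·R{t,u}) induces an injective A_R-algebra morphism A_R[u]/(F·A_R[u]) → R{t,u}/(F·R{t,u}). Equivalently, A_R[u] ∩ F·R{t,u} = F·A_R[u]. -/
open Filter Topology

noncomputable section

/-- Coefficient condition defining `R{t,u}`. -/
def T2OK {R : Type*} [NormedField R] (c : ℕ × ℕ → R) : Prop :=
  ∀ r : ℝ, 0 < r →
    Tendsto (fun mn : ℕ × ℕ => ‖c mn‖ * r ^ (mn.1 + mn.2)) (cocompact (ℕ × ℕ)) (𝓝 0)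

/-- Multiplication of two-variable power series on coefficients. -/
def mul2 {R : Type*} [CommRing R] (c d : ℕ × ℕ → R) : ℕ × ℕ → R := fun mn =>
  ∑ i ∈ Finset.range (mn.1 + 1), ∑ j ∈ Finset.range (mn.2 + 1),
    c (i, j) * d (mn.1 - i, mn.2 - j)

/-- Condition on a sequence of coefficients defining an entire series over `R`. -/
def EntireSeq {R : Type*} [NormedField R] (a : ℕ → R) : Prop :=
  ∀ r : ℝ, 0 < r → Tendsto (fun n : ℕ => ‖a n‖ * r ^ n) atTop (𝓝 0)

/-- Condition describing elements of the polynomial ring `A_R[u] ⊆ R{t,u}`: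
polynomials in `u` whose coefficients are entire series in `t`. -/
def PolyUOK {R : Type*} [NormedField R] (c : ℕ × ℕ → R) : Prop :=
  (∃ N : ℕ, ∀ p : ℕ × ℕ, N < p.2 → c p = 0) ∧
  (∀ n : ℕ, EntireSeq (fun m => c (m, n)))

/-!
Suppose `F h = G` with `h ∈ R{t,u}` and `G` of `u`-degree at most `N`. Comparing the coefficients
of `t^m u^(n+D)` for `n + D > N` gives `h_{m,n} = -∑_{i ≤ m, j < D} F_{i,j} h_{m-i, n+D-j}`, which
expresses each such coefficient of `h` through coefficients of strictly higher `u`-degree. If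
`‖F_{i,j}‖ ≤ C` and `‖h_{m,n}‖ s^n ≤ B` for some `s > C`, the ultrametric inequality turns this into
`‖h_{m,n}‖ s^n ≤ (C/s) · B`, and iterating gives `(C/s)^t · B` for every `t`, so `h_{m,n} = 0`.
Hence `h` is a polynomial in `u`, and its coefficients are entire because `h ∈ R{t,u}`.
-/

section CoefficientConditions

variable {R : Type*} [NormedField R] {c : ℕ × ℕ → R}

theorem T2OK.bddAbove_range (hc : T2OK c) {s : ℝ} (hs : 0 < s) :
    BddAbove (Set.range fun p : ℕ × ℕ => ‖c p‖ * s ^ (p.1 + p.2)) :=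
  (cocompact_eq_cofinite (ℕ × ℕ) ▸ hc s hs).bddAbove_range_of_cofinite

theorem T2OK.entireSeq (hc : T2OK c) (n : ℕ) : EntireSeq fun m => c (m, n) := by
  intro r hr
  have hcol : Tendsto (fun m : ℕ => (m, n)) atTop (cocompact (ℕ × ℕ)) := by
    have : Tendsto (fun m : ℕ => (m, n)) atTop (comap Prod.fst atTop) :=
      tendsto_comap_iff.2 tendsto_id
    rw [← coprod_cocompact, cocompact_eq_atTop]
    exact this.mono_right le_sup_left
  simpa [pow_add, ← mul_assoc, hr.ne'] using ((hc r hr).comp hcol).div_const (r ^ n)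

theorem PolyUOK.t2OK (hc : PolyUOK c) : T2OK c := by
  obtain ⟨⟨N, hN⟩, hcols⟩ := hc
  intro r hr
  set φ : ℕ → ℝ := fun m => ∑ n ∈ Finset.range (N + 1), ‖c (m, n)‖ * r ^ (m + n)
  have hφ : Tendsto φ atTop (𝓝 0) := by
    simpa [φ, pow_add, mul_assoc] using tendsto_finsetSum (Finset.range (N + 1))
      fun n _ => (hcols n r hr).mul_const (r ^ n)
  have hle_φ (p : ℕ × ℕ) : ‖c p‖ * r ^ (p.1 + p.2) ≤ φ p.1 := by
    by_cases hp : p.2 ≤ N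
    · exact Finset.single_le_sum (f := fun n => ‖c (p.1, n)‖ * r ^ (p.1 + n))
        (fun n _ => by positivity) (Finset.mem_range.2 (Nat.lt_succ_of_le hp))
    · rw [hN p (not_le.1 hp), norm_zero, zero_mul]
      exact Finset.sum_nonneg fun n _ => by positivity
  rw [← coprod_cocompact, cocompact_eq_atTop]
  refine tendsto_sup.2 ⟨?_, ?_⟩
  · exact squeeze_zero (fun p => by positivity) hle_φ (hφ.comp tendsto_comap)
  · refine tendsto_const_nhds.congr' ?_
    filter_upwards [tendsto_comap.eventually (eventually_gt_atTop N)] with p hp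
    simp [hN p hp]

theorem T2OK.polyUOK (hc : T2OK c) {N : ℕ} (hN : ∀ p : ℕ × ℕ, N < p.2 → c p = 0) :
    PolyUOK c :=
  ⟨⟨N, hN⟩, hc.entireSeq⟩

end CoefficientConditions

/-- `F = u ^ D + ∑_{j < D} F_j(t) u ^ j`, where `F_j(t) = ∑_m F (m, j) t ^ m`. -/
structure IsUMonic {R : Type*} [CommRing R] (F : ℕ × ℕ → R) (D : ℕ) : Prop where
  coeff_zero_top : F (0, D) = 1
  coeff_pos_top : ∀ m : ℕ, 0 < m → F (m, D) = 0
  coeff_eq_zero_of_lt : ∀ p : ℕ × ℕ, D < p.2 → F p = 0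

namespace IsUMonic

open Finset

variable {R : Type*} {F : ℕ × ℕ → R} {D : ℕ}

theorem mul2_apply_add [CommRing R] (hF : IsUMonic F D) (h : ℕ × ℕ → R) (m n : ℕ) :
    mul2 F h (m, n + D) = h (m, n) +
      ∑ i ∈ range (m + 1), ∑ j ∈ range D, F (i, j) * h (m - i, n + D - j) := by
  have hcol (i : ℕ) : ∑ j ∈ range (n + D + 1), F (i, j) * h (m - i, n + D - j) =
      ∑ j ∈ range D, F (i, j) * h (m - i, n + D - j) + F (i, D) * h (m - i, n) := by
    rw [← sum_subset (range_subset_range.2 (by omega : D + 1 ≤ n + D + 1)),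
      sum_range_succ, Nat.add_sub_cancel]
    intro j hj hjD
    simp only [mem_range] at hj hjD
    rw [hF.coeff_eq_zero_of_lt (i, j) (by omega), zero_mul]
  have htop : ∑ i ∈ range (m + 1), F (i, D) * h (m - i, n) = h (m, n) := by
    rw [sum_eq_single_of_mem 0 (by simp), hF.coeff_zero_top, one_mul, Nat.sub_zero]
    intro i _ hi
    rw [hF.coeff_pos_top i (Nat.pos_of_ne_zero hi), zero_mul]
  rw [mul2, sum_congr rfl fun i _ => hcol i, sum_add_distrib, htop, add_comm]

theorem norm_mul_pow_le [NormedField R] [IsUltrametricDist R] {h : ℕ × ℕ → R}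
    (hF : IsUMonic F D) {C s B : ℝ} {N : ℕ} (hFC : ∀ p, ‖F p‖ ≤ C) (hs : 1 ≤ s)
    (hB : ∀ p : ℕ × ℕ, ‖h p‖ * s ^ (p.1 + p.2) ≤ B)
    (hG : ∀ p : ℕ × ℕ, N < p.2 → mul2 F h p = 0) (t : ℕ) :
    ∀ m n, N < n + D → ‖h (m, n)‖ * s ^ n ≤ (C / s) ^ t * B := by
  have hC : 0 ≤ C := (norm_nonneg _).trans (hFC 0)
  have hB0 : 0 ≤ B := (by positivity : 0 ≤ ‖h 0‖ * s ^ _).trans (hB 0)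
  have hs0 : 0 < s := by linarith
  induction t with
  | zero =>
    intro m n _
    calc ‖h (m, n)‖ * s ^ n ≤ ‖h (m, n)‖ * s ^ (m + n) := by gcongr; omega
      _ ≤ (C / s) ^ 0 * B := by simpa using hB (m, n)
  | succ t ih =>
    intro m n hn
    set K := (C / s) ^ t * B
    have hrec : h (m, n) = -∑ i ∈ range (m + 1), ∑ j ∈ range D,
        F (i, j) * h (m - i, n + D - j) :=
      eq_neg_of_add_eq_zero_left (hF.mul2_apply_add h m n ▸ hG (m, n + D) (by simpa using hn))
    have hterm (i j : ℕ) (hj : j < D) :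
        ‖F (i, j) * h (m - i, n + D - j)‖ ≤ C * (K / s ^ (n + 1)) := by
      rw [norm_mul]
      gcongr
      · exact hFC _
      rw [le_div_iff₀ (by positivity)]
      calc ‖h (m - i, n + D - j)‖ * s ^ (n + 1)
          ≤ ‖h (m - i, n + D - j)‖ * s ^ (n + D - j) := by gcongr; omega
        _ ≤ K := ih _ _ (by omega)
    have hnorm : ‖h (m, n)‖ ≤ C * (K / s ^ (n + 1)) := by
      rw [hrec, norm_neg]
      exact IsUltrametricDist.norm_sum_le_of_forall_le_of_nonneg (by positivity) fun i _ =>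
        IsUltrametricDist.norm_sum_le_of_forall_le_of_nonneg (by positivity) fun j hj =>
          hterm i j (mem_range.1 hj)
    calc ‖h (m, n)‖ * s ^ n ≤ C * (K / s ^ (n + 1)) * s ^ n := by gcongr
      _ = (C / s) ^ (t + 1) * B := by simp only [K]; rw [pow_succ, pow_succ]; field_simp

theorem eq_zero_of_mul2_eq_zero [NormedField R] [IsUltrametricDist R] {h : ℕ × ℕ → R}
    (hF : IsUMonic F D) (hFT : T2OK F) (hh : T2OK h) {N : ℕ}
    (hG : ∀ p : ℕ × ℕ, N < p.2 → mul2 F h p = 0)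
    (p : ℕ × ℕ) (hp : N < p.2 + D) : h p = 0 := by
  obtain ⟨C, hC⟩ := hFT.bddAbove_range one_pos
  have hFC (q : ℕ × ℕ) : ‖F q‖ ≤ C := by simpa using hC ⟨q, rfl⟩
  have hC0 : 0 ≤ C := (norm_nonneg _).trans (hFC 0)
  obtain ⟨B, hB⟩ := hh.bddAbove_range (s := C + 1) (by positivity)
  have hlim : Tendsto (fun t => (C / (C + 1)) ^ t * B) atTop (𝓝 0) := by
    simpa using (tendsto_pow_atTop_nhds_zero_of_lt_one (by positivity)
      ((div_lt_one (by positivity)).2 (lt_add_one C))).mul_const B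
  have hle : ‖h p‖ * (C + 1) ^ p.2 ≤ 0 := ge_of_tendsto' hlim fun t =>
    norm_mul_pow_le hF hFC (by linarith) (fun q => hB ⟨q, rfl⟩) hG t p.1 p.2 hp
  exact norm_le_zero_iff.1 (nonpos_of_mul_nonpos_left hle (by positivity))

end IsUMonic

theorem poly_ideal_contraction_general {R : Type*} [NormedField R]
    (hna : IsNonarchimedean (norm : R → ℝ))
    (F : ℕ × ℕ → R) (hF : PolyUOK F)
    (D : ℕ)
    (hmonic₀ : F (0, D) = 1) (hmonic : ∀ m : ℕ, 0 < m → F (m, D) = 0)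
    (hdeg : ∀ p : ℕ × ℕ, D < p.2 → F p = 0) :
    ∀ G : ℕ × ℕ → R, PolyUOK G →
      ((∃ h : ℕ × ℕ → R, T2OK h ∧ G = mul2 F h) ↔
       (∃ Q : ℕ × ℕ → R, PolyUOK Q ∧ G = mul2 F Q)) := by
  intro G hG
  refine ⟨?_, fun ⟨Q, hQ, hGQ⟩ => ⟨Q, hQ.t2OK, hGQ⟩⟩
  rintro ⟨h, hh, rfl⟩
  obtain ⟨N, hN⟩ := hG.1
  have := IsUltrametricDist.isUltrametricDist_of_isNonarchimedean_norm hna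
  have hFu : IsUMonic F D := ⟨hmonic₀, hmonic, hdeg⟩
  exact ⟨h, hh.polyUOK (N := N) fun p hp =>
    hFu.eq_zero_of_mul2_eq_zero hF.t2OK hh hN p (by omega), rfl⟩

/-- Let `R` be a complete non-Archimedean valued field and `F ∈ A_R[u]` monic and
non-constant in `u` (of degree `D ≥ 1` in `u`). Then `A_R[u] ∩ F·R{t,u} = F·A_R[u]`;
i.e. the natural map `A_R[u]/(F·A_R[u]) → R{t,u}/(F·R{t,u})` is injective. -/
theorem poly_ideal_contraction {R : Type*} [NormedField R] [CompleteSpace R]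
    (hna : IsNonarchimedean (norm : R → ℝ))
    (F : ℕ × ℕ → R) (hF : PolyUOK F)
    (D : ℕ) (hD : 0 < D)
    (hmonic₀ : F (0, D) = 1) (hmonic : ∀ m : ℕ, 0 < m → F (m, D) = 0)
    (hdeg : ∀ p : ℕ × ℕ, D < p.2 → F p = 0) :
    ∀ G : ℕ × ℕ → R, PolyUOK G →
      ((∃ h : ℕ × ℕ → R, T2OK h ∧ G = mul2 F h) ↔
       (∃ Q : ℕ × ℕ → R, PolyUOK Q ∧ G = mul2 F Q)) :=
  poly_ideal_contraction_general hna F hF D hmonic₀ hmonic hdeg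
end
end

section
/- Let R be an integral domain with a non-Archimedean absolute value and A_R the ring of entire power series over R. If P ∈ R[t] is a nonzero polynomial and h ∈ A_R divides P in A_R, then h is a polynomial, i.e., h ∈ R[t]. -/
/-!
For `r > 0` the largest term `μ_r(f) = max_n ‖f_n‖ r ^ n` of an entire series satisfies
`μ_r(f) μ_r(g) ≤ μ_r(fg)` in the nonarchimedean setting: if `i` and `j` are the last indices at
which the terms of `f` and `g` are maximal, then `f_i g_j` is strictly the largest summand of the
coefficient of `fg` at `i + j`, so that coefficient has norm `‖f_i‖ ‖g_j‖`. If `h` had a nonzero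
coefficient beyond `deg P`, then `μ_r(h) μ_r(g)` would grow at least like `r ^ (deg P + 1)`,
whereas `μ_r(P) = O(r ^ deg P)`.
-/

open Filter Topology

noncomputable section

/-- The power series attached to a polynomial over `R`. -/
def polyPS {R : Type*} [CommRing R] (q : Polynomial R) : PowerSeries R :=
  PowerSeries.mk fun n => q.coeff n

open PowerSeries

theorem polyPS_eq_coe {R : Type*} [CommRing R] (q : Polynomial R) :
    polyPS q = (q : PowerSeries R) := by
  ext n
  rw [polyPS, coeff_mk, Polynomial.coeff_coe]

theorem exists_last_argmax_of_eventually_lt {α : Type*} [LinearOrder α] {w : ℕ → α} {n : ℕ}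
    (hw : ∀ᶠ a in atTop, w a < w n) :
    ∃ i, (∀ a, w a ≤ w i) ∧ ∀ a, i < a → w a < w i := by
  obtain ⟨B, hB⟩ := eventually_atTop.1 hw
  have hnB : n < B := by
    by_contra! hBn
    exact lt_irrefl _ (hB n hBn)
  -- maximising `(w a, a)` lexicographically picks the last index at which `w` is maximal
  obtain ⟨i, -, hi⟩ := (Finset.range B).exists_max_image (fun a => toLex (w a, a))
    ⟨n, Finset.mem_range.2 hnB⟩
  have hlex : ∀ a < B, w a < w i ∨ w a = w i ∧ a ≤ i := fun a ha =>
    Prod.Lex.toLex_le_toLex.1 (hi a (Finset.mem_range.2 ha))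
  have hni : w n ≤ w i := by
    rcases hlex n hnB with h | h
    exacts [h.le, h.1.le]
  have htail : ∀ a, B ≤ a → w a < w i := fun a ha => (hB a ha).trans_le hni
  refine ⟨i, fun a => ?_, fun a hia => ?_⟩
  · rcases lt_or_ge a B with ha | ha
    · rcases hlex a ha with h | h
      exacts [h.le, h.1.le]
    · exact (htail a ha).le
  · rcases lt_or_ge a B with ha | ha
    · rcases hlex a ha with h | h
      · exact h
      · exact absurd h.2 (not_le.2 hia)
    · exact htail a ha

theorem EntireOK.exists_last_argmax {R : Type*} [NormedCommRing R] {f : PowerSeries R}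
    (hf : EntireOK f) {r : ℝ} (hr : 0 < r) {n : ℕ} (hn : coeff n f ≠ 0) :
    ∃ i, (∀ a, ‖coeff a f‖ * r ^ a ≤ ‖coeff i f‖ * r ^ i) ∧
      ∀ a, i < a → ‖coeff a f‖ * r ^ a < ‖coeff i f‖ * r ^ i :=
  exists_last_argmax_of_eventually_lt <|
    (hf r hr).eventually_lt_const (mul_pos (norm_pos_iff.2 hn) (pow_pos hr n))

theorem norm_coeff_add_mul_of_last_argmax {R : Type*} [NormedRing R]
    (hna : IsNonarchimedean (norm : R → ℝ)) (hmul : ∀ x y : R, ‖x * y‖ = ‖x‖ * ‖y‖)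
    {f g : PowerSeries R} {r : ℝ} (hr : 0 < r) {i j : ℕ}
    (hfi : 0 < ‖coeff i f‖) (hgj : 0 < ‖coeff j g‖)
    (hi : ∀ a, ‖coeff a f‖ * r ^ a ≤ ‖coeff i f‖ * r ^ i)
    (hi_last : ∀ a, i < a → ‖coeff a f‖ * r ^ a < ‖coeff i f‖ * r ^ i)
    (hj : ∀ b, ‖coeff b g‖ * r ^ b ≤ ‖coeff j g‖ * r ^ j)
    (hj_last : ∀ b, j < b → ‖coeff b g‖ * r ^ b < ‖coeff j g‖ * r ^ j) :
    ‖coeff (i + j) (f * g)‖ = ‖coeff i f‖ * ‖coeff j g‖ := by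
  rw [coeff_mul, ← hmul]
  have hij : (i, j) ∈ Finset.HasAntidiagonal.antidiagonal (i + j) :=
    Finset.HasAntidiagonal.mem_antidiagonal.2 rfl
  refine hna.apply_sum_eq_of_lt (fun a => (norm_neg a).symm) hij fun p hp hpij => ?_
  have hsum : p.1 + p.2 = i + j := Finset.HasAntidiagonal.mem_antidiagonal.1 hp
  have hterms : (‖coeff p.1 f‖ * r ^ p.1) * (‖coeff p.2 g‖ * r ^ p.2) <
      (‖coeff i f‖ * r ^ i) * (‖coeff j g‖ * r ^ j) := by
    rcases lt_or_ge i p.1 with hip | hpi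
    · exact mul_lt_mul_of_lt_of_le_of_nonneg_of_pos (hi_last _ hip) (hj _) (by positivity)
        (by positivity)
    · have hjp : j < p.2 := by
        by_contra! hpj
        exact hpij (Prod.ext (by omega) (by omega))
      exact mul_lt_mul_of_le_of_lt_of_nonneg_of_pos (hi _) (hj_last _ hjp) (by positivity)
        (by positivity)
  have hpow : r ^ p.1 * r ^ p.2 = r ^ i * r ^ j := by rw [← pow_add, ← pow_add, hsum]
  rw [hmul, hmul]
  refine lt_of_mul_lt_mul_right (a := r ^ i * r ^ j) ?_ (by positivity)
  calc ‖coeff p.1 f‖ * ‖coeff p.2 g‖ * (r ^ i * r ^ j)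
      = (‖coeff p.1 f‖ * r ^ p.1) * (‖coeff p.2 g‖ * r ^ p.2) := by rw [← hpow]; ring
    _ < (‖coeff i f‖ * r ^ i) * (‖coeff j g‖ * r ^ j) := hterms
    _ = ‖coeff i f‖ * ‖coeff j g‖ * (r ^ i * r ^ j) := by ring

theorem EntireOK.exists_mul_le_norm_coeff_mul {R : Type*} [NormedCommRing R]
    (hna : IsNonarchimedean (norm : R → ℝ)) (hmul : ∀ x y : R, ‖x * y‖ = ‖x‖ * ‖y‖)
    {f g : PowerSeries R} (hf : EntireOK f) (hg : EntireOK g) {r : ℝ} (hr : 0 < r) {n m : ℕ}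
    (hn : coeff n f ≠ 0) (hm : coeff m g ≠ 0) :
    ∃ k, ‖coeff n f‖ * r ^ n * (‖coeff m g‖ * r ^ m) ≤ ‖coeff k (f * g)‖ * r ^ k := by
  obtain ⟨i, hi, hi_last⟩ := hf.exists_last_argmax hr hn
  obtain ⟨j, hj, hj_last⟩ := hg.exists_last_argmax hr hm
  have pos_of_le {x : R} {a : ℕ} (hx : x ≠ 0) {y : R} {b : ℕ} (hle : ‖x‖ * r ^ a ≤ ‖y‖ * r ^ b) :
      0 < ‖y‖ :=
    pos_of_mul_pos_left ((mul_pos (norm_pos_iff.2 hx) (pow_pos hr a)).trans_le hle)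
      (pow_nonneg hr.le b)
  refine ⟨i + j, ?_⟩
  rw [norm_coeff_add_mul_of_last_argmax hna hmul hr (pos_of_le hn (hi n)) (pos_of_le hm (hj m))
    hi hi_last hj hj_last]
  calc ‖coeff n f‖ * r ^ n * (‖coeff m g‖ * r ^ m)
      ≤ ‖coeff i f‖ * r ^ i * (‖coeff j g‖ * r ^ j) :=
        mul_le_mul (hi n) (hj m) (by positivity) (by positivity)
    _ = ‖coeff i f‖ * ‖coeff j g‖ * r ^ (i + j) := by ring

theorem Polynomial.norm_coeff_mul_pow_le {R : Type*} [SeminormedRing R] (P : Polynomial R)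
    {r : ℝ} (hr : 1 ≤ r) (k : ℕ) :
    ‖P.coeff k‖ * r ^ k ≤ (∑ l ∈ P.support, ‖P.coeff l‖) * r ^ P.natDegree := by
  by_cases hk : k ∈ P.support
  · exact mul_le_mul (Finset.single_le_sum (fun l _ => norm_nonneg (P.coeff l)) hk)
      (pow_le_pow_right₀ hr (P.le_natDegree_of_mem_supp k hk)) (by positivity)
      (Finset.sum_nonneg fun l _ => norm_nonneg _)
  · rw [Polynomial.notMem_support_iff.1 hk, norm_zero, zero_mul]
    exact mul_nonneg (Finset.sum_nonneg fun l _ => norm_nonneg _) (by positivity)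

theorem not_forall_mul_pow_succ_le {ε C : ℝ} (hε : 0 < ε) (N : ℕ) :
    ¬ ∀ r : ℝ, 1 ≤ r → ε * r ^ (N + 1) ≤ C * r ^ N := by
  intro hall
  set r := max 1 (C / ε + 1)
  have hr : 0 < r := zero_lt_one.trans_le (le_max_left _ _)
  have hεr : ε * r ≤ C := le_of_mul_le_mul_right
    (by simpa only [pow_succ, mul_assoc, mul_comm r] using hall r (le_max_left _ _))
    (pow_pos hr N)
  have hCr : C / ε + 1 ≤ r := le_max_right _ _
  rw [div_add_one hε.ne', div_le_iff₀ hε] at hCr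
  linarith

theorem PowerSeries.eq_coe_trunc_of_coeff_eq_zero {R : Type*} [Semiring R] {f : PowerSeries R}
    {d : ℕ} (hf : ∀ k, d ≤ k → coeff k f = 0) : f = (trunc d f : PowerSeries R) := by
  ext k
  rw [Polynomial.coeff_coe, coeff_trunc]
  split_ifs with hk
  · rfl
  · exact hf k (not_lt.1 hk)

theorem divisor_of_polynomial_is_polynomial_general {R : Type*} [NormedCommRing R]
    (hna : IsNonarchimedean (norm : R → ℝ))
    (hmul : ∀ x y : R, ‖x * y‖ = ‖x‖ * ‖y‖)
    (P : Polynomial R) (hP : P ≠ 0)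
    (h g : PowerSeries R) (hh : EntireOK h) (hg : EntireOK g)
    (hdvd : polyPS P = h * g) :
    ∃ q : Polynomial R, h = polyPS q := by
  rw [polyPS_eq_coe] at hdvd
  by_contra hpoly
  obtain ⟨n, hnN, hn⟩ : ∃ n, P.natDegree < n ∧ coeff n h ≠ 0 := by
    by_contra! htail
    exact hpoly ⟨trunc (P.natDegree + 1) h, by
      rw [polyPS_eq_coe]
      exact eq_coe_trunc_of_coeff_eq_zero fun k hk => htail k hk⟩
  obtain ⟨m, hm⟩ : ∃ m, coeff m g ≠ 0 := exists_coeff_ne_zero_iff_ne_zero.2 <| by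
    rintro rfl
    exact hP (Polynomial.coe_eq_zero_iff.1 (by rw [hdvd, mul_zero]))
  refine not_forall_mul_pow_succ_le (C := ∑ l ∈ P.support, ‖P.coeff l‖)
    (mul_pos (norm_pos_iff.2 hn) (norm_pos_iff.2 hm)) P.natDegree fun r hr => ?_
  obtain ⟨k, hk⟩ := hh.exists_mul_le_norm_coeff_mul hna hmul hg (by positivity) hn hm
  calc ‖coeff n h‖ * ‖coeff m g‖ * r ^ (P.natDegree + 1)
      ≤ ‖coeff n h‖ * ‖coeff m g‖ * r ^ (n + m) :=
        mul_le_mul_of_nonneg_left (pow_le_pow_right₀ hr (by omega)) (by positivity)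
    _ = ‖coeff n h‖ * r ^ n * (‖coeff m g‖ * r ^ m) := by ring
    _ ≤ ‖coeff k (h * g)‖ * r ^ k := hk
    _ = ‖P.coeff k‖ * r ^ k := by rw [← hdvd, Polynomial.coeff_coe]
    _ ≤ (∑ l ∈ P.support, ‖P.coeff l‖) * r ^ P.natDegree := P.norm_coeff_mul_pow_le hr k

/-- Let `R` be an integral domain with a non-Archimedean absolute value. If a nonzero
polynomial `P ∈ R[t]` is divisible in `A_R` by `h ∈ A_R`, then `h` is a polynomial. -/
theorem divisor_of_polynomial_is_polynomial {R : Type*} [NormedCommRing R] [IsDomain R]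
    (hna : IsNonarchimedean (norm : R → ℝ))
    (hmul : ∀ x y : R, ‖x * y‖ = ‖x‖ * ‖y‖)
    (P : Polynomial R) (hP : P ≠ 0)
    (h g : PowerSeries R) (hh : EntireOK h) (hg : EntireOK g)
    (hdvd : polyPS P = h * g) :
    ∃ q : Polynomial R, h = polyPS q :=
  divisor_of_polynomial_is_polynomial_general hna hmul P hP h g hh hg hdvd
end
end

section
/- Let R be an integral domain of characteristic p > 2 with a non-Archimedean absolute value, and define polynomials x_n, y_n ∈ 𝔽_p[t] ⊆ A_R by x_n + y_n√(t²-1) = (t+√(t²-1))^n. Then for integers m, n: m divides n in ℤ if and only if y_m divides y_n in A_R. -/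
/-!
The Pell polynomials are Chebyshev polynomials: `x_n = T_n` and `y_n = U_{n-1}`. The addition
law `x_{a+b} + y_{a+b} α = (x_a + y_a α)(x_b + y_b α)` gives `y_m ∣ y_{mk}`. Conversely, write
`n = mq + r` with `0 ≤ r < |m|`; since `y_{mq}` and `x_{mq}` are coprime by the Pell equation
`x² - (t² - 1) y² = 1`, `y_m ∣ y_n` forces `y_m ∣ y_r`, and as `2 ≠ 0` the degree of `y_r` is
`r - 1`, so `r = 0`.

Divisibility in `A_R` is divisibility in `R[X]`: if `A g = B` with `A ≠ 0`, `B` polynomials and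
`g` entire, comparing coefficients beyond `deg B` and using the ultrametric inequality bounds
`‖g_j‖ ≤ C ‖g_{j'}‖` for some `j' > j`, so `‖g_j‖ rʲ` would not tend to `0` for `r = max C 1`
unless `g_j = 0`; hence `g` is a polynomial.
-/

open Filter Topology

noncomputable section

/-- The Pell polynomials `(x_n, y_n)` for `n ≥ 0`, defined by
`x_n + y_n α = (t + α)^n` with `α² = t² - 1`. -/
def pellRec : ℕ → Polynomial ℤ × Polynomial ℤ
  | 0 => (1, 0)
  | n + 1 =>
      (Polynomial.X * (pellRec n).1 + (Polynomial.X ^ 2 - 1) * (pellRec n).2,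
       (pellRec n).1 + Polynomial.X * (pellRec n).2)

/-- `y_n` for `n ∈ ℤ`. -/
def pellY (n : ℤ) : Polynomial ℤ :=
  if 0 ≤ n then (pellRec n.natAbs).2 else -(pellRec n.natAbs).2

/-- The image of an integer polynomial in `PowerSeries R`; for `char R = p` this
realizes the Pell polynomials as elements of `𝔽_p[t] ⊆ A_R`. -/
def intPolyPS (R : Type*) [CommRing R] (p : Polynomial ℤ) : PowerSeries R :=
  PowerSeries.mk fun n => ((p.coeff n : ℤ) : R)

open Polynomial

namespace Polynomial.Chebyshev

variable (R : Type*) [CommRing R]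

theorem eq_of_add_two_eq {f g : ℤ → R[X]}
    (hf : ∀ n, f (n + 2) = 2 * X * f (n + 1) - f n)
    (hg : ∀ n, g (n + 2) = 2 * X * g (n + 1) - g n)
    (h₀ : f 0 = g 0) (h₁ : f 1 = g 1) : f = g := by
  funext n
  induction n using Chebyshev.induct with
  | zero => exact h₀
  | one => exact h₁
  | add_two n ih₁ ih₀ => rw [hf, hg, ih₁, ih₀]
  | neg_add_one n ih₀ ih₁ =>
    have ef := hf (-n - 1)
    have eg := hg (-n - 1)
    rw [show -(n : ℤ) - 1 + 2 = -n + 1 by ring, show -(n : ℤ) - 1 + 1 = -n by ring] at ef eg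
    linear_combination ef - eg - ih₁ + 2 * X * ih₀

theorem U_sub_one_add_two (n : ℤ) :
    U R (n + 2 - 1) = 2 * X * U R (n + 1 - 1) - U R (n - 1) := by
  rw [show n + 2 - 1 = n + 1 by ring, add_sub_cancel_right, U_add_one]

theorem T_add (a b : ℤ) :
    T R (a + b) = T R a * T R b + (X ^ 2 - 1) * (U R (a - 1) * U R (b - 1)) := by
  refine congrFun (eq_of_add_two_eq R (f := fun b ↦ T R (a + b))
    (g := fun b ↦ T R a * T R b + (X ^ 2 - 1) * (U R (a - 1) * U R (b - 1))) ?_ ?_ ?_ ?_) b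
  · intro n
    simp only [← add_assoc, T_add_two]
  · intro n
    simp only [T_add_two, U_sub_one_add_two]
    ring
  · simp
  · have := T_eq_X_mul_T_sub_pol_U R (a - 1)
    rw [show a - 1 + 2 = a + 1 by ring, sub_add_cancel] at this
    simp only [T_one, sub_self, U_zero]
    linear_combination this

theorem U_add_sub_one (a b : ℤ) :
    U R (a + b - 1) = T R a * U R (b - 1) + U R (a - 1) * T R b := by
  refine congrFun (eq_of_add_two_eq R (f := fun b ↦ U R (a + b - 1))
    (g := fun b ↦ T R a * U R (b - 1) + U R (a - 1) * T R b) ?_ ?_ ?_ ?_) b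
  · intro n
    simp only [← add_assoc, U_sub_one_add_two]
  · intro n
    simp only [T_add_two, U_sub_one_add_two]
    ring
  · simp
  · have := U_eq_X_mul_U_add_T R (a - 1)
    rw [sub_add_cancel] at this
    simp only [T_one, sub_self, U_zero, add_sub_cancel_right]
    linear_combination this

theorem T_sq_sub_mul_U_sq (n : ℤ) : T R n ^ 2 - (X ^ 2 - 1) * U R (n - 1) ^ 2 = 1 := by
  have := T_add R n (-n)
  rw [add_neg_cancel, T_zero, T_neg, U_neg_sub_one] at this
  linear_combination -this

theorem isCoprime_U_sub_one_T (n : ℤ) : IsCoprime (U R (n - 1)) (T R n) :=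
  ⟨-((X ^ 2 - 1) * U R (n - 1)), T R n, by linear_combination T_sq_sub_mul_U_sq R n⟩

theorem U_sub_one_dvd_U_mul_sub_one (m k : ℤ) : U R (m - 1) ∣ U R (m * k - 1) := by
  induction k using Int.induction_on with
  | zero => simp
  | succ k ih =>
    rw [mul_add, mul_one, U_add_sub_one]
    exact dvd_add (dvd_mul_left _ _) (ih.mul_right _)
  | pred k ih =>
    rw [mul_sub, mul_one, sub_eq_add_neg _ m, U_add_sub_one, U_neg_sub_one, T_neg]
    exact dvd_add ((dvd_neg.2 dvd_rfl).mul_left _) (ih.mul_right _)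

theorem dvd_of_U_sub_one_dvd [IsDomain R] [NeZero (2 : R)] {m n : ℤ}
    (h : U R (m - 1) ∣ U R (n - 1)) : m ∣ n := by
  rcases eq_or_ne m 0 with rfl | hm
  · rw [zero_sub, U_neg_one, zero_dvd_iff, U_eq_zero_iff] at h
    simp [show n = 0 by linarith]
  set q := n / m
  set r := n % m
  have hq := U_sub_one_dvd_U_mul_sub_one R m q
  have hsplit := U_add_sub_one R (m * q) r
  rw [Int.mul_ediv_add_emod] at hsplit
  have hr : U R (m - 1) ∣ U R (r - 1) := by
    have : U R (m - 1) ∣ T R (m * q) * U R (r - 1) := by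
      rw [show T R (m * q) * U R (r - 1) = U R (n - 1) - U R (m * q - 1) * T R r by
        rw [hsplit]; ring]
      exact dvd_sub h (hq.mul_right _)
    exact ((isCoprime_U_sub_one_T R (m * q)).of_isCoprime_of_dvd_left hq).dvd_of_dvd_mul_left
      this
  have hr0 : 0 ≤ r := Int.emod_nonneg n hm
  have hrm : r < m.natAbs := Int.emod_lt n hm
  by_contra hmn
  have hr_pos : 0 < r := lt_of_le_of_ne hr0 (Ne.symm fun h0 => hmn (Int.dvd_of_emod_eq_zero h0))
  have hdeg := natDegree_le_of_dvd hr (U_ne_zero R _ (by omega))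
  rw [natDegree_U, natDegree_U, sub_add_cancel, sub_add_cancel] at hdeg
  omega

theorem U_sub_one_dvd_U_sub_one_iff [IsDomain R] [NeZero (2 : R)] {m n : ℤ} :
    U R (m - 1) ∣ U R (n - 1) ↔ m ∣ n :=
  ⟨dvd_of_U_sub_one_dvd R, fun ⟨k, hk⟩ => hk ▸ U_sub_one_dvd_U_mul_sub_one R m k⟩

end Polynomial.Chebyshev

theorem PowerSeries.coeff_coe_mul_of_natDegree_le {R : Type*} [Semiring R] (A : R[X])
    (G : PowerSeries R) {N : ℕ} (hN : A.natDegree ≤ N) :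
    PowerSeries.coeff N ((A : PowerSeries R) * G) =
      ∑ i ∈ Finset.range (A.natDegree + 1), A.coeff i * PowerSeries.coeff (N - i) G := by
  rw [PowerSeries.coeff_mul, Finset.Nat.sum_antidiagonal_eq_sum_range_succ_mk]
  simp only [Polynomial.coeff_coe]
  symm
  refine Finset.sum_subset (Finset.range_subset_range.2 (by omega)) fun i _ hi => ?_
  rw [Finset.mem_range, not_lt] at hi
  rw [Polynomial.coeff_eq_zero_of_natDegree_lt (by omega), zero_mul]

theorem nonpos_of_tendsto_zero_of_forall_exists_le {u : ℕ → ℝ} (hu : Tendsto u atTop (𝓝 0))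
    {j₀ : ℕ} (hstep : ∀ j, j₀ ≤ j → ∃ j', j < j' ∧ u j ≤ u j') {j : ℕ} (hj : j₀ ≤ j) :
    u j ≤ 0 := by
  by_contra! hpos
  have hlarge : ∀ k, ∃ n, k ≤ n ∧ j ≤ n ∧ u j ≤ u n := by
    intro k
    induction k with
    | zero => exact ⟨j, by omega, le_rfl, le_rfl⟩
    | succ k ih =>
      obtain ⟨n, hkn, hjn, hn⟩ := ih
      obtain ⟨n', hnn', hn'⟩ := hstep n (by omega)
      exact ⟨n', by omega, by omega, hn.trans hn'⟩
  obtain ⟨N, hN⟩ := eventually_atTop.1 (hu.eventually (gt_mem_nhds hpos))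
  obtain ⟨n, hNn, -, hn⟩ := hlarge N
  exact (hN n hNn).not_ge hn

theorem eq_zero_of_forall_exists_le_mul {f : ℕ → ℝ} {C : ℝ} {j₀ : ℕ} (hf : ∀ n, 0 ≤ f n)
    (hstep : ∀ j, j₀ ≤ j → ∃ j', j < j' ∧ f j ≤ C * f j')
    (hdecay : ∀ r : ℝ, 0 < r → Tendsto (fun n => f n * r ^ n) atTop (𝓝 0))
    {j : ℕ} (hj : j₀ ≤ j) : f j = 0 := by
  set r := max C 1
  have hr : 1 ≤ r := le_max_right _ _
  have hstep' : ∀ j, j₀ ≤ j → ∃ j', j < j' ∧ f j * r ^ j ≤ f j' * r ^ j' := by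
    intro j hj
    obtain ⟨j', hjj', hle⟩ := hstep j hj
    refine ⟨j', hjj', ?_⟩
    calc f j * r ^ j ≤ r * f j' * r ^ j := by
          gcongr
          exact hle.trans (mul_le_mul_of_nonneg_right (le_max_left _ _) (hf j'))
      _ = f j' * r ^ (j + 1) := by ring
      _ ≤ f j' * r ^ j' := mul_le_mul_of_nonneg_left (pow_le_pow_right₀ hr hjj') (hf j')
  have := nonpos_of_tendsto_zero_of_forall_exists_le (hdecay r (by positivity)) hstep' hj
  exact le_antisymm (nonpos_of_mul_nonpos_left this (by positivity)) (hf j)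

section Ultrametric

variable {R : Type*} [NormedCommRing R] [IsUltrametricDist R] [NormMulClass R]

theorem exists_norm_coeff_le_mul_of_coe_mul_eq {A B : R[X]} {G : PowerSeries R} (hA : A ≠ 0)
    (h : (A : PowerSeries R) * G = B) {j : ℕ} (hj : B.natDegree < j + A.natDegree) :
    ∃ j', j < j' ∧ ‖PowerSeries.coeff j G‖ ≤
      (∑ i ∈ Finset.range A.natDegree, ‖A.coeff i‖) / ‖A.leadingCoeff‖ *
        ‖PowerSeries.coeff j' G‖ := by
  set d := A.natDegree
  have hrec : A.leadingCoeff * PowerSeries.coeff j G =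
      -∑ i ∈ Finset.range d, A.coeff i * PowerSeries.coeff (j + d - i) G := by
    have h0 := PowerSeries.coeff_coe_mul_of_natDegree_le A G (N := j + d) (by omega)
    rw [h, Polynomial.coeff_coe, Polynomial.coeff_eq_zero_of_natDegree_lt hj,
      Finset.sum_range_succ, Nat.add_sub_cancel, Polynomial.coeff_natDegree] at h0
    linear_combination -h0
  have hlc : 0 < ‖A.leadingCoeff‖ := norm_pos_iff.2 (leadingCoeff_ne_zero.2 hA)
  rcases Nat.eq_zero_or_pos d with hd | hd
  · rw [hd, Finset.sum_range_zero, neg_zero, mul_eq_zero] at hrec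
    refine ⟨j + 1, by omega, ?_⟩
    simp [hd, hrec.resolve_left (leadingCoeff_ne_zero.2 hA)]
  obtain ⟨i, hi, hle⟩ := IsUltrametricDist.exists_norm_finsetSum_le_of_nonempty
    (Finset.nonempty_range_iff.2 hd.ne') fun i => A.coeff i * PowerSeries.coeff (j + d - i) G
  rw [Finset.mem_range] at hi
  refine ⟨j + d - i, by omega, ?_⟩
  rw [div_mul_eq_mul_div, le_div_iff₀ hlc, mul_comm, ← norm_mul, hrec, norm_neg]
  calc _ ≤ ‖A.coeff i‖ * ‖PowerSeries.coeff (j + d - i) G‖ := by rwa [← norm_mul]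
    _ ≤ _ := by
      gcongr
      exact Finset.single_le_sum (f := fun i => ‖A.coeff i‖) (fun _ _ => norm_nonneg _)
        (Finset.mem_range.2 hi)

theorem coeff_eq_zero_of_coe_mul_eq {A B : R[X]} {G : PowerSeries R} (hG : EntireOK G)
    (hA : A ≠ 0) (h : (A : PowerSeries R) * G = B) {j : ℕ} (hj : B.natDegree < j) :
    PowerSeries.coeff j G = 0 :=
  norm_eq_zero.1 <| eq_zero_of_forall_exists_le_mul (fun _ => norm_nonneg _)
    (j₀ := B.natDegree + 1) (fun _ hk => exists_norm_coeff_le_mul_of_coe_mul_eq hA h (by omega))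
    hG hj

theorem dvd_of_coe_mul_eq {A B : R[X]} {G : PowerSeries R} (hG : EntireOK G)
    (h : (A : PowerSeries R) * G = B) : A ∣ B := by
  rcases eq_or_ne A 0 with rfl | hA
  · rw [Polynomial.coe_zero, zero_mul, eq_comm, Polynomial.coe_eq_zero_iff] at h
    rw [h]
  have hG_poly : (PowerSeries.trunc (B.natDegree + 1) G : PowerSeries R) = G := by
    ext k
    rw [Polynomial.coeff_coe, PowerSeries.coeff_trunc]
    split_ifs with hk
    · rfl
    · exact (coeff_eq_zero_of_coe_mul_eq hG hA h (by omega)).symm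
  refine ⟨PowerSeries.trunc (B.natDegree + 1) G, Polynomial.coe_inj.1 ?_⟩
  rw [Polynomial.coe_mul, hG_poly, h]

end Ultrametric

theorem entireOK_coe {R : Type*} [NormedCommRing R] (Q : R[X]) :
    EntireOK (Q : PowerSeries R) := by
  intro r _
  refine tendsto_const_nhds.congr' ?_
  filter_upwards [eventually_gt_atTop Q.natDegree] with n hn
  rw [Polynomial.coeff_coe, Polynomial.coeff_eq_zero_of_natDegree_lt hn, norm_zero, zero_mul]

open Polynomial.Chebyshev

theorem pellRec_eq (n : ℕ) : pellRec n = (T ℤ n, U ℤ (n - 1)) := by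
  induction n with
  | zero => simp [pellRec]
  | succ n ih =>
    have hT := T_eq_X_mul_T_sub_pol_U ℤ (n - 1)
    have hU := U_eq_X_mul_U_add_T ℤ (n - 1)
    rw [show (n : ℤ) - 1 + 2 = n + 1 by ring, sub_add_cancel] at hT
    rw [sub_add_cancel] at hU
    rw [pellRec, ih, Prod.mk.injEq]
    push_cast
    constructor
    · linear_combination -hT
    · rw [add_sub_cancel_right]; linear_combination -hU

theorem pellY_eq_U (n : ℤ) : pellY n = U ℤ (n - 1) := by
  unfold pellY
  rw [pellRec_eq]
  split_ifs with hn
  · rw [Int.natAbs_of_nonneg hn]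
  · rw [Int.ofNat_natAbs_of_nonpos (by omega), ← U_neg_sub_one, neg_neg]

theorem intPolyPS_eq_coe_map (R : Type*) [CommRing R] (P : ℤ[X]) :
    intPolyPS R P = (P.map (Int.castRingHom R) : PowerSeries R) := by
  ext n
  simp [intPolyPS, Polynomial.coeff_coe]

theorem intPolyPS_pellY (R : Type*) [CommRing R] (n : ℤ) :
    intPolyPS R (pellY n) = (U R (n - 1) : PowerSeries R) := by
  rw [intPolyPS_eq_coe_map, pellY_eq_U, map_U]

theorem pellY_dvd_iff_general {R : Type*} [NormedCommRing R] [IsDomain R]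
    (p : ℕ) (hp2 : 2 < p) [CharP R p]
    (hna : IsNonarchimedean (norm : R → ℝ))
    (hmul : ∀ x y : R, ‖x * y‖ = ‖x‖ * ‖y‖) :
    ∀ m n : ℤ, m ∣ n ↔
      ∃ g : PowerSeries R, EntireOK g ∧
        intPolyPS R (pellY n) = intPolyPS R (pellY m) * g := by
  have : IsUltrametricDist R := .isUltrametricDist_of_isNonarchimedean_norm hna
  have : NormMulClass R := ⟨hmul⟩
  have : NeZero (2 : R) := by
    simpa using NeZero.of_not_dvd R (n := 2) (p := p) fun h => by
      have := Nat.le_of_dvd two_pos h; omega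
  intro m n
  rw [← U_sub_one_dvd_U_sub_one_iff R, intPolyPS_pellY, intPolyPS_pellY]
  constructor
  · rintro ⟨q, hq⟩
    exact ⟨q, entireOK_coe q, by rw [hq, Polynomial.coe_mul]⟩
  · rintro ⟨g, hg, h⟩
    exact dvd_of_coe_mul_eq hg h.symm

/-- Let `R` be an integral domain of characteristic `p > 2` with a non-Archimedean
absolute value. For integers `m, n`: `m ∣ n` in `ℤ` if and only if `y_m ∣ y_n`
in `A_R`. -/
theorem pellY_dvd_iff {R : Type*} [NormedCommRing R] [IsDomain R]
    (p : ℕ) (hp : p.Prime) (hp2 : 2 < p) [CharP R p]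
    (hna : IsNonarchimedean (norm : R → ℝ))
    (hmul : ∀ x y : R, ‖x * y‖ = ‖x‖ * ‖y‖) :
    ∀ m n : ℤ, m ∣ n ↔
      ∃ g : PowerSeries R, EntireOK g ∧
        intPolyPS R (pellY n) = intPolyPS R (pellY m) * g :=
  pellY_dvd_iff_general p hp2 hna hmul
end
end

section
/- Let p > 2 be prime and let x_m ∈ 𝔽_p[t] be the Pell polynomials defined by x_m + y_m√(t²-1) = (t+√(t²-1))^m. Then x_m(t+1) = x_m(t) + 1 if and only if m = ±p^r for some r ≥ 0. -/
/-!
Reduced mod `p`, `x_m` is the Chebyshev polynomial `T_{|m|}`. Since `p` is odd, `T_p = X^p` in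
characteristic `p`, so writing `|m| = p^r s` with `p ∤ s` gives `x_m = T_s^{p^r}`, and since
Frobenius is injective on `𝔽_p[t]` the shift identity holds for `x_m` iff it holds for `T_s`.
For `s ≥ 2` it fails: comparing coefficients of `t^{s-1}` forces `s · 2^{s-1} = 0` in `𝔽_p`.
-/

noncomputable section

/-- `x_n` for `n ∈ ℤ` (note `x_{-n} = x_n`). -/
def pellX (n : ℤ) : Polynomial ℤ := (pellRec n.natAbs).1

/-- Reduction of an integer polynomial modulo `p`, realizing the Pell polynomials
in `𝔽_p[t]`. -/
def redp (p : ℕ) (q : Polynomial ℤ) : Polynomial (ZMod p) :=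
  q.map (Int.castRingHom (ZMod p))

open Polynomial Polynomial.Chebyshev

theorem Polynomial.Chebyshev.T_eq_X_pow_of_charP {R : Type*} [CommRing R] [Invertible (2 : R)]
    (p : ℕ) [Fact p.Prime] [CharP R p] : T R p = X ^ p := by
  have h2X : (2 * X : R[X]) ^ p = 2 * X ^ p := by
    rw [two_mul, two_mul, add_pow_char]
  rw [chebyshev_T_eq_dickson_one_one, dickson_one_one_charP, pow_comp, X_comp, h2X, ← mul_assoc,
    ← C_ofNat, ← Polynomial.C_mul, invOf_mul_self, C_1, one_mul]

theorem Polynomial.Chebyshev.T_pow_eq_X_pow_pow {R : Type*} [CommRing R] [Invertible (2 : R)]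
    (p : ℕ) [Fact p.Prime] [CharP R p] (r : ℕ) : T R ((p : ℤ) ^ r) = X ^ p ^ r := by
  induction r with
  | zero => simp
  | succ r ih =>
    rw [pow_succ, T_mul, ih, T_eq_X_pow_of_charP, pow_comp, X_comp, ← pow_mul, ← pow_succ']

theorem Polynomial.coeff_comp_X_add_one_of_natDegree_le {R : Type*} [CommRing R] (f : R[X])
    (k : ℕ) (hk : f.natDegree ≤ k + 1) :
    (f.comp (X + 1)).coeff k = f.coeff k + (k + 1) * f.coeff (k + 1) := by
  have hdeg : (hasseDeriv k f).natDegree < 2 := (natDegree_hasseDeriv_le f k).trans_lt (by omega)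
  rw [← C_1, ← taylor_apply, taylor_coeff, eval_eq_sum_range' hdeg]
  simp [Finset.sum_range_succ, hasseDeriv_coeff, add_comm 1 k, Nat.choose_succ_self_right]

theorem Polynomial.pow_comp_X_add_one_eq_add_one_iff {R : Type*} [CommRing R] [IsDomain R] (p : ℕ)
    [Fact p.Prime] [CharP R p] (f : R[X]) (r : ℕ) :
    (f ^ p ^ r).comp (X + 1) = f ^ p ^ r + 1 ↔ f.comp (X + 1) = f + 1 := by
  have hfrob : f ^ p ^ r + 1 = (f + 1) ^ p ^ r := by rw [add_pow_char_pow, one_pow]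
  rw [pow_comp, hfrob]
  exact (iterateFrobenius_inj R[X] p r).eq_iff

theorem Polynomial.Chebyshev.T_comp_X_add_one_eq_add_one_iff {R : Type*} [CommRing R] [IsDomain R]
    [NeZero (2 : R)] {s : ℕ} (hs : (s : R) ≠ 0) :
    (T R s).comp (X + 1) = T R s + 1 ↔ s = 1 := by
  refine ⟨fun h ↦ ?_, fun h ↦ by simp [h]⟩
  by_contra hs1
  have hs0 : s ≠ 0 := by rintro rfl; exact hs Nat.cast_zero
  have hdeg : (T R s).natDegree = s - 1 + 1 := by rw [natDegree_T, Int.natAbs_natCast]; omega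
  have hc := coeff_comp_X_add_one_of_natDegree_le (T R s) (s - 1) hdeg.le
  rw [h, ← hdeg, coeff_natDegree, leadingCoeff_T, coeff_add, coeff_one, if_neg (by omega),
    add_zero, left_eq_add, Int.natAbs_natCast, ← Nat.cast_add_one, Nat.sub_add_cancel (by omega)]
    at hc
  exact mul_ne_zero hs (pow_ne_zero _ two_ne_zero) hc

theorem pellRec_eq_T_U : ∀ n : ℕ,
    (pellRec n).1 = T ℤ n ∧ (pellRec n).2 = U ℤ ((n : ℤ) - 1)
  | 0 => by simp [pellRec]
  | n + 1 => by
    obtain ⟨h1, h2⟩ := pellRec_eq_T_U n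
    have hT := T_eq_X_mul_T_sub_pol_U ℤ ((n : ℤ) - 1)
    have hU := U_eq_X_mul_U_add_T ℤ ((n : ℤ) - 1)
    simp only [sub_add_cancel, show (n : ℤ) - 1 + 2 = n + 1 by ring] at hT hU
    simp only [pellRec, h1, h2, Nat.cast_add_one, add_sub_cancel_right, hT, hU]
    constructor <;> ring

theorem redp_pellX (p : ℕ) (m : ℤ) : redp p (pellX m) = T (ZMod p) m.natAbs := by
  rw [redp, pellX, (pellRec_eq_T_U _).1, map_T]

theorem Polynomial.Chebyshev.T_comp_X_add_one_eq_add_one_iff_eq_pow {K : Type*} [Field K]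
    [NeZero (2 : K)] (p : ℕ) [hp : Fact p.Prime] [CharP K p] (n : ℕ) :
    (T K n).comp (X + 1) = T K n + 1 ↔ ∃ r, n = p ^ r := by
  have := invertibleOfNonzero (two_ne_zero (α := K))
  rcases eq_or_ne n 0 with rfl | hn
  · simpa using fun r ↦ (pow_ne_zero r hp.out.ne_zero).symm
  obtain ⟨r, s, hps, rfl⟩ := Nat.exists_eq_pow_mul_and_not_dvd hn p hp.out.ne_one
  have hT : T K (p ^ r * s : ℕ) = T K s ^ p ^ r := by
    push_cast
    rw [T_mul, T_pow_eq_X_pow_pow, X_pow_comp]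
  rw [hT, pow_comp_X_add_one_eq_add_one_iff,
    T_comp_X_add_one_eq_add_one_iff ((CharP.cast_eq_zero_iff K p s).not.mpr hps)]
  constructor
  · rintro rfl
    exact ⟨r, mul_one _⟩
  · rintro ⟨r', h⟩
    exact ((hp.out.coprime_iff_not_dvd.mpr hps).symm.pow_right r').eq_one_of_dvd
      (Dvd.intro_left _ h)

/-- Let `p > 2` be prime. In `𝔽_p[t]`, `x_m(t+1) = x_m(t) + 1` if and only if
`m = ± p^r` for some `r ≥ 0`. -/
theorem pellX_shift_iff (p : ℕ) (hp : p.Prime) (hp2 : 2 < p) (m : ℤ) :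
    (redp p (pellX m)).comp (Polynomial.X + 1) = redp p (pellX m) + 1 ↔
      ∃ r : ℕ, m = (p : ℤ) ^ r ∨ m = -((p : ℤ) ^ r) := by
  have : Fact p.Prime := ⟨hp⟩
  have hp_not_dvd_two : ¬p ∣ 2 := Nat.not_dvd_of_pos_of_lt two_pos hp2
  have : NeZero (2 : ZMod p) :=
    ⟨by exact_mod_cast mt (ZMod.natCast_eq_zero_iff 2 p).mp hp_not_dvd_two⟩
  rw [redp_pellX, T_comp_X_add_one_eq_add_one_iff_eq_pow p]
  simp only [Int.natAbs_eq_iff, Nat.cast_pow]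
end
end

section
/- Let k be an algebraically closed field of characteristic p ≥ 17 and let f, g ∈ k[t] with f or g non-constant. Suppose there exist squares u_1, …, u_{17} ∈ k[t] with u_{n+2} - 2u_{n+1} + u_n = 2 for 1 ≤ n ≤ 15, fg = u_1, f + g = u_2 - u_1 - 1, and g divides f in k[t]. Then there exists r ≥ 0 such that f = g^{p^r}. -/
/-!
The recurrence forces `u (n + 1) = (f + n) * (g + n)`, so `(f + c) * (g + c)` is a square for
`c = 0, …, 16`; three such constants in the prime field already suffice. If `deg g ≤ deg f` and
`f ≠ g`, then `f' = 0`: each `f + c` is its radical times a cofactor dividing `f'`, while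
differentiating `(f + c) * (g + c) = w ^ 2` shows that the radical divides `f' * (f - g)`. Both
families are pairwise coprime in `c`, so `3 deg f ≤ 2 deg f' + deg f < 3 deg f` unless `f' = 0`.
Hence `f = f₁ ^ p`, and as `f + c = (f₁ + c) ^ p` with `p` odd, `(f₁ + c) * (g + c)` is again a
square; induction on the degrees gives `f = g ^ p ^ r` or `g = f ^ p ^ r`, and `g ∣ f` excludes
the second alternative unless `r = 0`.
-/

open Function Polynomial UniqueFactorizationMonoid EuclideanDomain

theorem isSquare_of_isSquare_sq_mul {R : Type*} [CommRing R] [IsDomain R] [IsIntegrallyClosed R]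
    {a b : R} (ha : a ≠ 0) (h : IsSquare (a ^ 2 * b)) : IsSquare b := by
  obtain ⟨w, hw⟩ := h
  obtain ⟨v, rfl⟩ : a ∣ w := by
    rw [← IsIntegrallyClosed.pow_dvd_pow_iff two_ne_zero, sq w, ← hw]
    exact dvd_mul_right _ _
  refine ⟨v, mul_left_cancel₀ (pow_ne_zero 2 ha) ?_⟩
  rw [hw]; ring

theorem isSquare_mul_of_isSquare_pow_mul {R : Type*} [CommRing R] [IsDomain R]
    [IsIntegrallyClosed R] {a b : R} {n : ℕ} (hn : Odd n) (ha : a ≠ 0)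
    (h : IsSquare (a ^ n * b)) : IsSquare (a * b) := by
  obtain ⟨m, rfl⟩ := hn
  refine isSquare_of_isSquare_sq_mul (pow_ne_zero m ha) ?_
  convert h using 1
  ring

namespace Polynomial

theorem sum_natDegree_le_of_pairwise_isCoprime_of_dvd {R ι : Type*} [CommRing R] [IsDomain R]
    {s : Finset ι} {h : ι → R[X]} {P : R[X]} (hP : P ≠ 0)
    (hcop : (s : Set ι).Pairwise (IsCoprime on h)) (hdvd : ∀ i ∈ s, h i ∣ P) :
    ∑ i ∈ s, (h i).natDegree ≤ P.natDegree := by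
  have hprod := Finset.prod_dvd_of_coprime hcop hdvd
  rw [← natDegree_prod _ _ (Finset.prod_ne_zero_iff.1 (ne_zero_of_dvd_ne_zero hP hprod))]
  exact natDegree_le_of_dvd hprod hP

variable {k : Type*} [Field k]

theorem isCoprime_add_C_add_C (f : k[X]) {c d : k} (hcd : c ≠ d) :
    IsCoprime (f + C c) (f + C d) := by
  refine ⟨C (c - d)⁻¹, -C (c - d)⁻¹, ?_⟩
  rw [neg_mul, ← sub_eq_add_neg, ← mul_sub, add_sub_add_left_eq_sub, ← C_sub, ← C_mul,
    inv_mul_cancel₀ (sub_ne_zero.2 hcd), C_1]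

theorem radical_add_C_dvd_derivative_mul_sub [DecidableEq k] {f g : k[X]} {c : k}
    (hsq : IsSquare ((f + C c) * (g + C c))) : radical (f + C c) ∣ derivative f * (f - g) := by
  obtain ⟨w, hw⟩ := hsq
  rcases eq_or_ne (f + C c) 0 with h0 | h0
  · rw [h0, radical_zero]
    exact one_dvd _
  have hw' : radical (f + C c) ∣ w :=
    (exists_dvd_pow_iff_radical_dvd h0).1 ⟨2, by rw [sq, ← hw]; exact dvd_mul_right _ _⟩
  have hder : derivative f * (g + C c) + (f + C c) * derivative g = 2 * w * derivative w := by
    have := congrArg derivative hw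
    simp only [derivative_mul, derivative_add, derivative_C, add_zero] at this
    rw [this]; ring
  have key : derivative f * (f - g) =
      (f + C c) * (derivative f + derivative g) - 2 * w * derivative w := by
    linear_combination -hder
  rw [key]
  exact dvd_sub (dvd_mul_of_dvd_left radical_dvd_self _)
    (dvd_mul_of_dvd_right hw' _ |>.mul_right _)

theorem derivative_eq_zero_of_isSquare_add_C_mul {S : Finset k} (hS : 3 ≤ S.card) {f g : k[X]}
    (hgf : g.natDegree ≤ f.natDegree) (hfg : f ≠ g)
    (hsq : ∀ c ∈ S, IsSquare ((f + C c) * (g + C c))) : derivative f = 0 := by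
  classical
  by_contra hf'
  have hf : f.natDegree ≠ 0 := fun h => hf' (derivative_of_natDegree_zero h)
  have hf'lt : (derivative f).natDegree < f.natDegree := natDegree_derivative_lt hf
  have hcop : (S : Set k).Pairwise (IsCoprime on fun c => f + C c) :=
    fun c _ d _ hcd => isCoprime_add_C_add_C f hcd
  have hrad : ∑ c ∈ S, (radical (f + C c)).natDegree ≤ (derivative f * (f - g)).natDegree :=
    sum_natDegree_le_of_pairwise_isCoprime_of_dvd (mul_ne_zero hf' (sub_ne_zero.2 hfg))
      (fun c hc d hd hcd => ((hcop hc hd hcd).of_isCoprime_of_dvd_left radical_dvd_self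
        |>.of_isCoprime_of_dvd_right radical_dvd_self))
      (fun c hc => radical_add_C_dvd_derivative_mul_sub (hsq c hc))
  have hdiv : ∑ c ∈ S, (divRadical (f + C c)).natDegree ≤ (derivative f).natDegree :=
    sum_natDegree_le_of_pairwise_isCoprime_of_dvd hf'
      (fun c hc d hd hcd => (hcop hc hd hcd).divRadical)
      (fun c _ => (divRadical_dvd_derivative (f + C c)).trans (by simp))
  have hsum : ∑ c ∈ S, ((radical (f + C c)).natDegree + (divRadical (f + C c)).natDegree) =
      S.card * f.natDegree := by
    rw [Finset.card_eq_sum_ones, Finset.sum_mul, one_mul]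
    refine Finset.sum_congr rfl fun c _ => ?_
    have h0 : f + C c ≠ 0 := fun h => hf (by rw [← natDegree_add_C (a := c), h, natDegree_zero])
    rw [← natDegree_mul radical_ne_zero (divRadical_ne_zero h0), radical_mul_divRadical,
      natDegree_add_C]
  have hprod := natDegree_mul_le (p := derivative f) (q := f - g)
  have hsub : (f - g).natDegree ≤ f.natDegree := (natDegree_sub_le f g).trans (max_le le_rfl hgf)
  rw [Finset.sum_add_distrib] at hsum
  have := Nat.mul_le_mul_right f.natDegree hS
  omega

theorem exists_pow_eq_of_derivative_eq_zero (p : ℕ) [ExpChar k p] [PerfectRing k p] {f : k[X]}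
    (hf : derivative f = 0) : ∃ f₁ : k[X], f₁ ^ p = f :=
  ⟨_, (polynomial_expand_eq k p _).symm.trans (expand_contract' p hf)⟩

theorem exists_eq_pow_or_eq_pow_of_isSquare_add_C_mul {p : ℕ} [Fact p.Prime] [CharP k p]
    [PerfectField k] (hp : p ≠ 2) {S : Finset k} (hS : 3 ≤ S.card)
    (hSp : ∀ c ∈ S, c ^ p = c) {f g : k[X]} (hnc : 0 < f.natDegree ∨ 0 < g.natDegree)
    (hsq : ∀ c ∈ S, IsSquare ((f + C c) * (g + C c))) :
    ∃ r, f = g ^ p ^ r ∨ g = f ^ p ^ r := by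
  have hp3 : 3 ≤ p := by have := (Fact.out : p.Prime).two_le; omega
  induction hN : f.natDegree + g.natDegree using Nat.strong_induction_on generalizing f g with
  | _ N ih =>
  wlog hgf : g.natDegree ≤ f.natDegree generalizing f g
  · obtain ⟨r, h⟩ := this hnc.symm (fun c hc => mul_comm (f + C c) (g + C c) ▸ hsq c hc)
      (by omega) (by omega)
    exact ⟨r, h.symm⟩
  obtain rfl | hfg := eq_or_ne f g
  · exact ⟨0, by simp⟩
  obtain ⟨f₁, rfl⟩ := exists_pow_eq_of_derivative_eq_zero p
    (derivative_eq_zero_of_isSquare_add_C_mul hS hgf hfg hsq)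
  rw [natDegree_pow] at hnc hgf hN
  have hf₁ : 0 < f₁.natDegree := Nat.pos_of_ne_zero fun h => by rw [h, mul_zero] at hnc hgf; omega
  have hsq₁ : ∀ c ∈ S, IsSquare ((f₁ + C c) * (g + C c)) := fun c hc =>
    isSquare_mul_of_isSquare_pow_mul ((Fact.out : p.Prime).odd_of_ne_two hp)
      (ne_zero_of_natDegree_gt (n := 0) (by rwa [natDegree_add_C]))
      (by rw [add_pow_char, ← C_pow, hSp c hc]; exact hsq c hc)
  have hlt : f₁.natDegree < p * f₁.natDegree := lt_mul_left hf₁ (by omega)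
  obtain ⟨r, h | h⟩ := ih _ (by omega) (Or.inl hf₁) hsq₁ rfl
  · exact ⟨r + 1, Or.inl (by rw [h, ← pow_mul, pow_succ])⟩
  · rcases r with _ | r
    · exact ⟨1, Or.inl (by simp [h])⟩
    · exact ⟨r, Or.inr (by rw [h, pow_succ', pow_mul])⟩

theorem eq_of_eq_pow_pow_of_dvd {R : Type*} [CommRing R] [IsDomain R] {f g : R[X]} {p r : ℕ}
    (hp : 1 < p) (hnc : 0 < f.natDegree ∨ 0 < g.natDegree) (h : g = f ^ p ^ r) (hdvd : g ∣ f) :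
    f = g := by
  have hf : 0 < f.natDegree := hnc.elim id fun hg => by
    rw [h, natDegree_pow] at hg
    exact Nat.pos_of_mul_pos_left hg
  have hr : p ^ r ≤ 1 := (pow_dvd_pow_iff (ne_zero_of_natDegree_gt hf)
    (not_isUnit_of_natDegree_pos f hf)).1 (by rwa [pow_one, ← h])
  obtain rfl : r = 0 := by
    by_contra hr0
    exact (Nat.one_lt_pow hr0 hp).not_ge hr
  simpa using h.symm

end Polynomial

theorem eq_add_natCast_mul_add_natCast {R : Type*} [CommRing R] {f g : R} {u : ℕ → R} {N : ℕ}
    (hu1 : f * g = u 1) (hu2 : f + g = u 2 - u 1 - 1)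
    (hrec : ∀ n : ℕ, 1 ≤ n → n ≤ N → u (n + 2) - 2 * u (n + 1) + u n = 2) :
    ∀ n ≤ N + 1, u (n + 1) = (f + n) * (g + n) := by
  intro n hn
  induction n using Nat.strong_induction_on with
  | _ n ih =>
    match n, ih with
    | 0, _ => simpa using hu1.symm
    | 1, _ => push_cast; linear_combination -hu2 - hu1
    | m + 2, ih =>
      have h0 := ih m (by omega) (by omega)
      have h1 := ih (m + 1) (by omega) (by omega)
      push_cast at h0 h1 ⊢
      linear_combination hrec (m + 1) (by omega) (by omega) + 2 * h1 - h0

/-- Let `k` be an algebraically closed field of characteristic `p ≥ 17` and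
`f, g ∈ k[t]` with `f` or `g` non-constant. If there are squares `u_1, …, u_17 ∈ k[t]`
with `u_{n+2} - 2u_{n+1} + u_n = 2` for `1 ≤ n ≤ 15`, `fg = u_1`,
`f + g = u_2 - u_1 - 1`, and `g ∣ f` in `k[t]`, then `f = g^{p^r}` for some `r ≥ 0`. -/
theorem buchi_application (k : Type*) [Field k] [IsAlgClosed k]
    (p : ℕ) (hp : p.Prime) (hp17 : 17 ≤ p) [CharP k p]
    (f g : Polynomial k) (hnc : 0 < f.natDegree ∨ 0 < g.natDegree)
    (u : ℕ → Polynomial k)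
    (hsq : ∀ n : ℕ, 1 ≤ n → n ≤ 17 → ∃ w : Polynomial k, u n = w ^ 2)
    (hrec : ∀ n : ℕ, 1 ≤ n → n ≤ 15 → u (n + 2) - 2 * u (n + 1) + u n = 2)
    (hu1 : f * g = u 1) (hu2 : f + g = u 2 - u 1 - 1)
    (hdvd : g ∣ f) :
    ∃ r : ℕ, f = g ^ p ^ r := by
  classical
  have := Fact.mk hp
  have hu := eq_add_natCast_mul_add_natCast hu1 hu2 hrec
  set S := (Finset.range 17).image (Nat.cast : ℕ → k)
  have hS : S.card = 17 := Finset.card_image_of_injOn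
    ((CharP.natCast_injOn_Iio k p).mono fun n hn => by simp only [Finset.coe_range, Set.mem_Iio] at hn ⊢; omega)
  have hSp : ∀ c ∈ S, c ^ p = c := Finset.forall_mem_image.2 fun n _ => by
    rw [← frobenius_def, map_natCast]
  have hsqS : ∀ c ∈ S, IsSquare ((f + C c) * (g + C c)) := by
    refine Finset.forall_mem_image.2 fun n hn => ?_
    rw [Finset.mem_range] at hn
    obtain ⟨w, hw⟩ := hsq (n + 1) (by omega) (by omega)
    exact ⟨w, by rw [map_natCast, ← hu n (by omega), hw, sq]⟩
  obtain ⟨r, h | h⟩ :=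
    exists_eq_pow_or_eq_pow_of_isSquare_add_C_mul (by omega) (by omega) hSp hnc hsqS
  · exact ⟨r, h⟩
  · exact ⟨0, by rw [pow_zero, pow_one, eq_of_eq_pow_pow_of_dvd hp.one_lt hnc h hdvd]⟩
end
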